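/- arXiv:2501.19208 — 6 statements merged into one kernel-verified Lean document; each statement's English description precedes it below -/
import Mathlib

section
/- Let n ≥ 1, let c = (c_{ij})_{1≤i,j≤n} and l = (l_{ij})_{1≤i,j≤n} be nonnegative reals, let y, y' ∈ [0,1]^n, and let P, P' ∈ [0,1]^{n×n} be row-stochastic. Define h(y,P) = M_c(y − Pᵀy) − ∑_{i,j=1}^n l_{ij} P_{ij} y_i. Then |h(y,P) − h(y',P')| ≤ n² · (2·max_{i,j} c_{ij} + max_{i,j} l_{ij}) · (‖y − y'‖₂ + ‖P − P'‖_F). -/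
/-- The repositioning cost `M_c(v)`: the minimum-cost network flow achieving net change `v`. -/
noncomputable def repoCost {n : ℕ} (c : Fin n → Fin n → ℝ) (v : Fin n → ℝ) : ℝ :=
  sInf {r : ℝ | ∃ ξ : Fin n → Fin n → ℝ, (∀ i j, 0 ≤ ξ i j) ∧
    (∀ j, (∑ i, ξ i j) - (∑ k, ξ j k) = v j) ∧ r = ∑ i, ∑ j, c i j * ξ i j}

/-- The Euclidean (ℓ²) norm on `ℝ^n`. -/
noncomputable def l2Norm {n : ℕ} (v : Fin n → ℝ) : ℝ := Real.sqrt (∑ i, (v i) ^ 2)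

/-- The Frobenius norm on `n × n` real matrices. -/
noncomputable def frobNorm {n : ℕ} (A : Fin n → Fin n → ℝ) : ℝ :=
  Real.sqrt (∑ i, ∑ j, (A i j) ^ 2)

/-- `P` is a row-stochastic matrix with entries in `[0,1]`. -/
def RowStochastic {n : ℕ} (P : Fin n → Fin n → ℝ) : Prop :=
  (∀ i j, 0 ≤ P i j ∧ P i j ≤ 1) ∧ ∀ i, (∑ j, P i j) = 1

open Finset in
lemma flow_exists {n : ℕ} (c : Fin n → Fin n → ℝ) (hc : ∀ i j, 0 ≤ c i j)
    (cmax : ℝ) (hcmax : IsGreatest {x : ℝ | ∃ i j, x = c i j} cmax)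
    (v : Fin n → ℝ) (hv : ∑ j, v j = 0) :
    ∃ ξ : Fin n → Fin n → ℝ, (∀ i j, 0 ≤ ξ i j) ∧
      (∀ j, (∑ i, ξ i j) - (∑ k, ξ j k) = v j) ∧
      (∑ i, ∑ j, c i j * ξ i j) ≤ cmax * ∑ j, |v j| := by
  obtain ⟨i0, j0, hij0⟩ := hcmax.1
  have hcm0 : 0 ≤ cmax := hij0 ▸ hc i0 j0
  set vp : Fin n → ℝ := fun j => max (v j) 0 with hvpdef
  set vm : Fin n → ℝ := fun j => max (-(v j)) 0 with hvmdef
  have hvp0 : ∀ j, 0 ≤ vp j := fun j => le_max_right _ _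
  have hvm0 : ∀ j, 0 ≤ vm j := fun j => le_max_right _ _
  have hsub : ∀ j, vp j - vm j = v j := by
    intro j
    rcases le_total (v j) 0 with h | h
    · simp [hvpdef, hvmdef, max_eq_right h, max_eq_left (by linarith : (0:ℝ) ≤ -(v j))]
    · simp [hvpdef, hvmdef, max_eq_left h, max_eq_right (by linarith : -(v j) ≤ 0)]
  have habs : ∀ j, vp j + vm j = |v j| := by
    intro j
    rcases le_total (v j) 0 with h | h
    · simp [hvpdef, hvmdef, max_eq_right h, max_eq_left (by linarith : (0:ℝ) ≤ -(v j)),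
        abs_of_nonpos h]
    · simp [hvpdef, hvmdef, max_eq_left h, max_eq_right (by linarith : -(v j) ≤ 0),
        abs_of_nonneg h]
  set S := ∑ j, vp j with hSdef
  have hS0 : 0 ≤ S := Finset.sum_nonneg fun j _ => hvp0 j
  have hSm : ∑ j, vm j = S := by
    have h1 : ∑ j, (vp j - vm j) = 0 := by
      rw [show (fun j => vp j - vm j) = v from funext hsub] at *
      · exact hv
    rw [Finset.sum_sub_distrib] at h1
    linarith
  have hSabs : S ≤ ∑ j, |v j| := by
    calc S = ∑ j, vp j := rfl
      _ ≤ ∑ j, (vp j + vm j) := Finset.sum_le_sum fun j _ => by linarith [hvm0 j]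
      _ = ∑ j, |v j| := Finset.sum_congr rfl fun j _ => habs j
  rcases eq_or_lt_of_le hS0 with hS | hS
  · -- S = 0 : v = 0
    have hvp_zero : ∀ j, vp j = 0 := by
      intro j
      have := (Finset.sum_eq_zero_iff_of_nonneg (fun j _ => hvp0 j)).1 hS.symm
      exact this j (Finset.mem_univ j)
    have hvm_zero : ∀ j, vm j = 0 := by
      intro j
      have h0 : ∑ j, vm j = 0 := by rw [hSm, ← hS]
      exact (Finset.sum_eq_zero_iff_of_nonneg (fun j _ => hvm0 j)).1 h0 j (Finset.mem_univ j)
    have hv0 : ∀ j, v j = 0 := by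
      intro j; have := hsub j; rw [hvp_zero j, hvm_zero j] at this; linarith
    refine ⟨fun _ _ => 0, fun i j => le_refl 0, fun j => by simp [hv0 j], ?_⟩
    simp only [mul_zero, Finset.sum_const_zero]
    exact mul_nonneg hcm0 (Finset.sum_nonneg fun j _ => abs_nonneg _)
  · -- S > 0
    refine ⟨fun i j => vm i * vp j / S, fun i j =>
      div_nonneg (mul_nonneg (hvm0 i) (hvp0 j)) hS0, ?_, ?_⟩
    · intro j
      have h1 : ∑ i, vm i * vp j / S = vp j := by
        rw [← Finset.sum_div, ← Finset.sum_mul, hSm]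
        field_simp
      have h2 : ∑ k, vm j * vp k / S = vm j := by
        rw [← Finset.sum_div, ← Finset.mul_sum, ← hSdef]
        field_simp
      rw [h1, h2, hsub]
    · have hsum : ∑ i, ∑ j, vm i * vp j / S = S := by
        have : ∀ i, ∑ j, vm i * vp j / S = vm i := by
          intro i
          rw [← Finset.sum_div, ← Finset.mul_sum, ← hSdef]
          field_simp
        rw [Finset.sum_congr rfl fun i _ => this i, hSm]
      calc ∑ i, ∑ j, c i j * (vm i * vp j / S)
          ≤ ∑ i, ∑ j, cmax * (vm i * vp j / S) := by
            refine Finset.sum_le_sum fun i _ => Finset.sum_le_sum fun j _ => ?_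
            exact mul_le_mul_of_nonneg_right (hcmax.2 ⟨i, j, rfl⟩)
              (div_nonneg (mul_nonneg (hvm0 i) (hvp0 j)) hS0)
        _ = cmax * ∑ i, ∑ j, vm i * vp j / S := by
            rw [Finset.mul_sum]; exact Finset.sum_congr rfl fun i _ => by rw [Finset.mul_sum]
        _ = cmax * S := by rw [hsum]
        _ ≤ cmax * ∑ j, |v j| := mul_le_mul_of_nonneg_left hSabs hcm0

open Finset in
lemma repo_bddBelow {n : ℕ} (c : Fin n → Fin n → ℝ) (hc : ∀ i j, 0 ≤ c i j)
    (v : Fin n → ℝ) :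
    BddBelow {r : ℝ | ∃ ξ : Fin n → Fin n → ℝ, (∀ i j, 0 ≤ ξ i j) ∧
      (∀ j, (∑ i, ξ i j) - (∑ k, ξ j k) = v j) ∧ r = ∑ i, ∑ j, c i j * ξ i j} := by
  refine ⟨0, fun r hr => ?_⟩
  obtain ⟨ξ, hξ0, _, hr⟩ := hr
  rw [hr]
  exact Finset.sum_nonneg fun i _ => Finset.sum_nonneg fun j _ =>
    mul_nonneg (hc i j) (hξ0 i j)

lemma repoCost_sub_le {n : ℕ} (c : Fin n → Fin n → ℝ) (hc : ∀ i j, 0 ≤ c i j)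
    (cmax : ℝ) (hcmax : IsGreatest {x : ℝ | ∃ i j, x = c i j} cmax)
    (v v' : Fin n → ℝ) (hv : ∑ j, v j = 0) (hv' : ∑ j, v' j = 0) :
    repoCost c v ≤ repoCost c v' + cmax * ∑ j, |v j - v' j| := by
  obtain ⟨ζ, hζ0, hζc, hζcost⟩ := flow_exists c hc cmax hcmax (fun j => v j - v' j)
    (by rw [Finset.sum_sub_distrib, hv, hv']; ring)
  rw [← sub_le_iff_le_add]
  unfold repoCost
  apply le_csInf
  · obtain ⟨ξ0, h1, h2, _⟩ := flow_exists c hc cmax hcmax v' hv'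
    exact ⟨_, ξ0, h1, h2, rfl⟩
  · rintro r ⟨ξ', h1, h2, h3⟩
    rw [sub_le_iff_le_add]
    have hmem : (∑ i, ∑ j, c i j * (ξ' i j + ζ i j)) ∈
        {r : ℝ | ∃ ξ : Fin n → Fin n → ℝ, (∀ i j, 0 ≤ ξ i j) ∧
          (∀ j, (∑ i, ξ i j) - (∑ k, ξ j k) = v j) ∧ r = ∑ i, ∑ j, c i j * ξ i j} := by
      refine ⟨fun i j => ξ' i j + ζ i j, fun i j => add_nonneg (h1 i j) (hζ0 i j), ?_, rfl⟩
      intro j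
      have e1 : ∑ i, (ξ' i j + ζ i j) = (∑ i, ξ' i j) + ∑ i, ζ i j :=
        Finset.sum_add_distrib
      have e2 : ∑ k, (ξ' j k + ζ j k) = (∑ k, ξ' j k) + ∑ k, ζ j k :=
        Finset.sum_add_distrib
      have := h2 j
      have := hζc j
      rw [e1, e2]
      have hA := h2 j
      have hB := hζc j
      linarith
    have hle : repoCost c v ≤ ∑ i, ∑ j, c i j * (ξ' i j + ζ i j) :=
      csInf_le (repo_bddBelow c hc v) hmem
    have hsplit : ∑ i, ∑ j, c i j * (ξ' i j + ζ i j)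
        = (∑ i, ∑ j, c i j * ξ' i j) + ∑ i, ∑ j, c i j * ζ i j := by
      rw [← Finset.sum_add_distrib]
      refine Finset.sum_congr rfl fun i _ => ?_
      rw [← Finset.sum_add_distrib]
      exact Finset.sum_congr rfl fun j _ => by ring
    calc repoCost c v ≤ (∑ i, ∑ j, c i j * ξ' i j) + ∑ i, ∑ j, c i j * ζ i j := by
          rw [← hsplit]; exact hle
      _ ≤ r + cmax * ∑ j, |v j - v' j| := by rw [h3]; linarith [hζcost]

lemma le_l2Norm {n : ℕ} (a : Fin n → ℝ) (i : Fin n) : |a i| ≤ l2Norm a := by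
  rw [l2Norm, ← Real.sqrt_sq_eq_abs]
  exact Real.sqrt_le_sqrt (Finset.single_le_sum (fun j _ => sq_nonneg (a j)) (Finset.mem_univ i))

lemma le_frobNorm {n : ℕ} (A : Fin n → Fin n → ℝ) (i j : Fin n) : |A i j| ≤ frobNorm A := by
  rw [frobNorm, ← Real.sqrt_sq_eq_abs]
  apply Real.sqrt_le_sqrt
  calc (A i j) ^ 2 ≤ ∑ k, (A i k) ^ 2 :=
        Finset.single_le_sum (fun k _ => sq_nonneg (A i k)) (Finset.mem_univ j)
    _ ≤ ∑ i', ∑ k, (A i' k) ^ 2 :=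
        Finset.single_le_sum (f := fun i' => ∑ k, (A i' k) ^ 2)
          (fun i' _ => Finset.sum_nonneg fun k _ => sq_nonneg _) (Finset.mem_univ i)

lemma abs_mul_sub_mul (a b c d : ℝ) (ha : 0 ≤ a) (ha1 : a ≤ 1) (hd : 0 ≤ d) (hd1 : d ≤ 1) :
    |a * b - c * d| ≤ |b - d| + |a - c| := by
  have h : a * b - c * d = a * (b - d) + (a - c) * d := by ring
  rw [h]
  calc |a * (b - d) + (a - c) * d| ≤ |a * (b - d)| + |(a - c) * d| := abs_add_le _ _
    _ = a * |b - d| + |a - c| * d := by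
        rw [abs_mul, abs_mul, abs_of_nonneg ha, abs_of_nonneg hd]
    _ ≤ 1 * |b - d| + |a - c| * 1 := by
        have := abs_nonneg (b - d); have := abs_nonneg (a - c); nlinarith
    _ = |b - d| + |a - c| := by ring

open Finset in
theorem stmt0 (n : ℕ) (hn : 1 ≤ n)
    (c l : Fin n → Fin n → ℝ)
    (hc : ∀ i j, 0 ≤ c i j) (hl : ∀ i j, 0 ≤ l i j)
    (cmax lmax : ℝ)
    (hcmax : IsGreatest {x : ℝ | ∃ i j, x = c i j} cmax)
    (hlmax : IsGreatest {x : ℝ | ∃ i j, x = l i j} lmax)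
    (y y' : Fin n → ℝ)
    (hy : ∀ i, y i ∈ Set.Icc (0 : ℝ) 1) (hy' : ∀ i, y' i ∈ Set.Icc (0 : ℝ) 1)
    (P P' : Fin n → Fin n → ℝ)
    (hP : RowStochastic P) (hP' : RowStochastic P') :
    |(repoCost c (fun j => y j - ∑ i, P i j * y i)
        - ∑ i, ∑ j, l i j * P i j * y i)
      - (repoCost c (fun j => y' j - ∑ i, P' i j * y' i)
        - ∑ i, ∑ j, l i j * P' i j * y' i)|
      ≤ (n : ℝ) ^ 2 * (2 * cmax + lmax)
          * (l2Norm (fun i => y i - y' i) + frobNorm (fun i j => P i j - P' i j)) := by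
  obtain ⟨i0, j0, hij0⟩ := hcmax.1
  have hcm0 : 0 ≤ cmax := hij0 ▸ hc i0 j0
  obtain ⟨i1, j1, hij1⟩ := hlmax.1
  have hlm0 : 0 ≤ lmax := hij1 ▸ hl i1 j1
  set v : Fin n → ℝ := fun j => y j - ∑ i, P i j * y i with hvdef
  set v' : Fin n → ℝ := fun j => y' j - ∑ i, P' i j * y' i with hv'def
  have hsum0 : ∀ (Q : Fin n → Fin n → ℝ) (z : Fin n → ℝ), (∀ i, ∑ j, Q i j = 1) →
      ∑ j, (z j - ∑ i, Q i j * z i) = 0 := by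
    intro Q z hQ
    rw [Finset.sum_sub_distrib, Finset.sum_comm]
    have : ∀ i, ∑ j, Q i j * z i = z i := by
      intro i; rw [← Finset.sum_mul, hQ i, one_mul]
    rw [Finset.sum_congr rfl fun i _ => this i]
    ring
  have hvsum : ∑ j, v j = 0 := hsum0 P y hP.2
  have hv'sum : ∑ j, v' j = 0 := hsum0 P' y' hP'.2
  set D1 := l2Norm (fun i => y i - y' i) with hD1def
  set D2 := frobNorm (fun i j => P i j - P' i j) with hD2def
  have hD1 : 0 ≤ D1 := Real.sqrt_nonneg _
  have hD2 : 0 ≤ D2 := Real.sqrt_nonneg _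
  have hptP : ∀ i j, |P i j * y i - P' i j * y' i| ≤ D1 + D2 := by
    intro i j
    have h := abs_mul_sub_mul (P i j) (y i) (P' i j) (y' i)
      (hP.1 i j).1 (hP.1 i j).2 (hy' i).1 (hy' i).2
    have h1 : |y i - y' i| ≤ D1 := le_l2Norm (fun i => y i - y' i) i
    have h2 : |P i j - P' i j| ≤ D2 := le_frobNorm (fun i j => P i j - P' i j) i j
    linarith
  have hΔv : ∀ j, |v j - v' j| ≤ D1 + (n : ℝ) * (D1 + D2) := by
    intro j
    have hvv : v j - v' j = (y j - y' j) - ∑ i, (P i j * y i - P' i j * y' i) := by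
      simp only [hvdef, hv'def, Finset.sum_sub_distrib]
      ring
    have h1 : |y j - y' j| ≤ D1 := le_l2Norm (fun i => y i - y' i) j
    have h2 : |∑ i, (P i j * y i - P' i j * y' i)| ≤ (n : ℝ) * (D1 + D2) := by
      calc |∑ i, (P i j * y i - P' i j * y' i)| ≤ ∑ i, |P i j * y i - P' i j * y' i| :=
            Finset.abs_sum_le_sum_abs _ _
        _ ≤ ∑ _i : Fin n, (D1 + D2) := Finset.sum_le_sum fun i _ => hptP i j
        _ = (n : ℝ) * (D1 + D2) := by
            rw [Finset.sum_const, Finset.card_univ, Fintype.card_fin, nsmul_eq_mul]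
    calc |v j - v' j| = |(y j - y' j) - ∑ i, (P i j * y i - P' i j * y' i)| := by rw [hvv]
      _ ≤ |y j - y' j| + |∑ i, (P i j * y i - P' i j * y' i)| := abs_sub _ _
      _ ≤ D1 + (n : ℝ) * (D1 + D2) := by linarith
  have hΔvsum : ∑ j, |v j - v' j| ≤ (n : ℝ) * (D1 + (n : ℝ) * (D1 + D2)) := by
    calc ∑ j, |v j - v' j| ≤ ∑ _j : Fin n, (D1 + (n : ℝ) * (D1 + D2)) :=
          Finset.sum_le_sum fun j _ => hΔv j
      _ = (n : ℝ) * (D1 + (n : ℝ) * (D1 + D2)) := by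
          rw [Finset.sum_const, Finset.card_univ, Fintype.card_fin, nsmul_eq_mul]
  have hM : |repoCost c v - repoCost c v'| ≤ cmax * ((n:ℝ) * (D1 + (n:ℝ) * (D1 + D2))) := by
    have A := repoCost_sub_le c hc cmax hcmax v v' hvsum hv'sum
    have B := repoCost_sub_le c hc cmax hcmax v' v hv'sum hvsum
    have hcomm : ∑ j, |v' j - v j| = ∑ j, |v j - v' j| := by
      exact Finset.sum_congr rfl fun j _ => abs_sub_comm _ _
    rw [hcomm] at B
    have hX : cmax * ∑ j, |v j - v' j| ≤ cmax * ((n:ℝ) * (D1 + (n:ℝ) * (D1 + D2))) :=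
      mul_le_mul_of_nonneg_left hΔvsum hcm0
    rw [abs_sub_le_iff]
    constructor <;> linarith
  have hL : |(∑ i, ∑ j, l i j * P i j * y i) - ∑ i, ∑ j, l i j * P' i j * y' i|
      ≤ lmax * ((n:ℝ)^2 * (D1 + D2)) := by
    have hterm : ∀ i j, |l i j * P i j * y i - l i j * P' i j * y' i| ≤ lmax * (D1 + D2) := by
      intro i j
      have he : l i j * P i j * y i - l i j * P' i j * y' i
          = l i j * (P i j * y i - P' i j * y' i) := by ring
      rw [he, abs_mul, abs_of_nonneg (hl i j)]
      exact mul_le_mul (hlmax.2 ⟨i, j, rfl⟩) (hptP i j) (abs_nonneg _) hlm0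
    have hrw : (∑ i, ∑ j, l i j * P i j * y i) - ∑ i, ∑ j, l i j * P' i j * y' i
        = ∑ i, ∑ j, (l i j * P i j * y i - l i j * P' i j * y' i) := by
      rw [← Finset.sum_sub_distrib]
      exact Finset.sum_congr rfl fun i _ => by rw [← Finset.sum_sub_distrib]
    rw [hrw]
    calc |∑ i, ∑ j, (l i j * P i j * y i - l i j * P' i j * y' i)|
        ≤ ∑ i, |∑ j, (l i j * P i j * y i - l i j * P' i j * y' i)| :=
          Finset.abs_sum_le_sum_abs _ _
      _ ≤ ∑ i, ∑ j, |l i j * P i j * y i - l i j * P' i j * y' i| :=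
          Finset.sum_le_sum fun i _ => Finset.abs_sum_le_sum_abs _ _
      _ ≤ ∑ _i : Fin n, ∑ _j : Fin n, lmax * (D1 + D2) :=
          Finset.sum_le_sum fun i _ => Finset.sum_le_sum fun j _ => hterm i j
      _ = lmax * ((n:ℝ)^2 * (D1 + D2)) := by
          rw [Finset.sum_const, Finset.sum_const, Finset.card_univ, Fintype.card_fin,
            nsmul_eq_mul, nsmul_eq_mul]
          ring
  have habs : |(repoCost c v - ∑ i, ∑ j, l i j * P i j * y i)
      - (repoCost c v' - ∑ i, ∑ j, l i j * P' i j * y' i)|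
      ≤ |repoCost c v - repoCost c v'|
        + |(∑ i, ∑ j, l i j * P i j * y i) - ∑ i, ∑ j, l i j * P' i j * y' i| := by
    have he : (repoCost c v - ∑ i, ∑ j, l i j * P i j * y i)
        - (repoCost c v' - ∑ i, ∑ j, l i j * P' i j * y' i)
        = (repoCost c v - repoCost c v')
          - ((∑ i, ∑ j, l i j * P i j * y i) - ∑ i, ∑ j, l i j * P' i j * y' i) := by ring
    rw [he]
    exact abs_sub _ _
  have hn1 : (1 : ℝ) ≤ (n : ℝ) := by exact_mod_cast hn
  have hnn : (n : ℝ) ≤ (n : ℝ)^2 := by nlinarith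
  calc |(repoCost c v - ∑ i, ∑ j, l i j * P i j * y i)
      - (repoCost c v' - ∑ i, ∑ j, l i j * P' i j * y' i)|
      ≤ cmax * ((n:ℝ) * (D1 + (n:ℝ) * (D1 + D2))) + lmax * ((n:ℝ)^2 * (D1 + D2)) := by
        linarith
    _ ≤ (n : ℝ) ^ 2 * (2 * cmax + lmax) * (D1 + D2) := by
        nlinarith [mul_nonneg (mul_nonneg hcm0 hD1) (sub_nonneg.2 hnn),
          mul_nonneg (mul_nonneg hcm0 hD2) (sq_nonneg (n:ℝ)),
          mul_nonneg hcm0 hD2, mul_nonneg hcm0 hD1]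
end

section
/- Let n ≥ 1, let d ∈ ℝ_{≥0}^n, let P ∈ [0,1]^{n×n} be row-stochastic, and let c = (c_{ij}), l = (l_{ij}) be nonnegative and satisfy the cost condition: ∑_{i=1}^n l_{ji} P_{ji} ≥ ∑_{i=1}^n P_{ji} c_{ij} for every j. Then for every y ∈ ℝ_{≥0}^n, LP(y) = M_c(w − Pᵀw) − ∑_{i,j=1}^n l_{ij} P_{ij} w_i, where w = min(y, d) componentwise; that is, fulfilling as much demand as possible (w = min(y,d)) is optimal in the LP. -/
/-- The censored-demand linear-program value `LP(y)`. -/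
noncomputable def LPval {n : ℕ} (c l : Fin n → Fin n → ℝ)
    (d : Fin n → ℝ) (P : Fin n → Fin n → ℝ) (y : Fin n → ℝ) : ℝ :=
  sInf {r : ℝ | ∃ ξ : Fin n → Fin n → ℝ, ∃ w : Fin n → ℝ,
    (∀ i j, 0 ≤ ξ i j) ∧ (∀ i, 0 ≤ w i) ∧ (∀ i, w i ≤ y i) ∧ (∀ i, w i ≤ d i) ∧
    (∀ j, (∑ i, ξ i j) - (∑ k, ξ j k) = w j - ∑ i, P i j * w i) ∧
    r = (∑ i, ∑ j, c i j * ξ i j) - ∑ i, ∑ j, l i j * P i j * w i}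

theorem aux4 (n : ℕ)
    (c l : Fin n → Fin n → ℝ)
    (hc : ∀ i j, 0 ≤ c i j)
    (d : Fin n → ℝ) (hd : ∀ i, 0 ≤ d i)
    (P : Fin n → Fin n → ℝ) (hP01 : ∀ i j, 0 ≤ P i j ∧ P i j ≤ 1)
    (hProw : ∀ i, (∑ j, P i j) = 1)
    (hcost : ∀ j, (∑ i, P j i * c i j) ≤ ∑ i, l j i * P j i)
    (y : Fin n → ℝ) (hy : ∀ i, 0 ≤ y i)
    (w : Fin n → ℝ) (hwdef : ∀ i, w i = min (y i) (d i)) :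
    LPval c l d P y
      = repoCost c (fun j => w j - ∑ i, P i j * w i)
        - ∑ i, ∑ j, l i j * P i j * w i := by
  have hw0 : ∀ i, 0 ≤ w i := fun i => (hwdef i) ▸ le_min (hy i) (hd i)
  have hwy : ∀ i, w i ≤ y i := fun i => (hwdef i) ▸ min_le_left _ _
  have hwd : ∀ i, w i ≤ d i := fun i => (hwdef i) ▸ min_le_right _ _
  -- canonical flow for a nonnegative vector δ : ξ i j = δ j * P j i
  have flow_net : ∀ δ : Fin n → ℝ, ∀ j : Fin n,
      (∑ i, δ j * P j i) - (∑ k, δ k * P k j) = δ j - ∑ i, P i j * δ i := by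
    intro δ j
    rw [← Finset.mul_sum, hProw j, mul_one]
    congr 1
    exact Finset.sum_congr rfl fun i _ => mul_comm _ _
  have flow_cost : ∀ δ : Fin n → ℝ, (∀ i, 0 ≤ δ i) →
      (∑ i, ∑ j, c i j * (δ j * P j i)) ≤ ∑ i, ∑ j, l i j * P i j * δ i := by
    intro δ hδ
    rw [Finset.sum_comm]
    calc ∑ j, ∑ i, c i j * (δ j * P j i)
        = ∑ j, δ j * ∑ i, P j i * c i j := by
          refine Finset.sum_congr rfl fun j _ => ?_
          rw [Finset.mul_sum]
          exact Finset.sum_congr rfl fun i _ => by ring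
      _ ≤ ∑ j, δ j * ∑ i, l j i * P j i :=
          Finset.sum_le_sum fun j _ => mul_le_mul_of_nonneg_left (hcost j) (hδ j)
      _ = ∑ i, ∑ j, l i j * P i j * δ i := by
          refine Finset.sum_congr rfl fun j _ => ?_
          rw [Finset.mul_sum]
          exact Finset.sum_congr rfl fun i _ => by ring
  simp only [LPval, repoCost]
  set T : Set ℝ := {r : ℝ | ∃ ξ : Fin n → Fin n → ℝ, (∀ i j, 0 ≤ ξ i j) ∧
    (∀ j, (∑ i, ξ i j) - (∑ k, ξ j k) = w j - ∑ i, P i j * w i) ∧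
    r = ∑ i, ∑ j, c i j * ξ i j} with hT
  set S : Set ℝ := {r : ℝ | ∃ ξ : Fin n → Fin n → ℝ, ∃ u : Fin n → ℝ,
    (∀ i j, 0 ≤ ξ i j) ∧ (∀ i, 0 ≤ u i) ∧ (∀ i, u i ≤ y i) ∧ (∀ i, u i ≤ d i) ∧
    (∀ j, (∑ i, ξ i j) - (∑ k, ξ j k) = u j - ∑ i, P i j * u i) ∧
    r = (∑ i, ∑ j, c i j * ξ i j) - ∑ i, ∑ j, l i j * P i j * u i} with hS
  -- the canonical flow for δ = w is feasible, showing nonemptiness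
  have hξ0nn : ∀ i j, (0:ℝ) ≤ w j * P j i := fun i j => mul_nonneg (hw0 j) (hP01 j i).1
  have hT_ne : T.Nonempty :=
    ⟨_, fun i j => w j * P j i, hξ0nn, fun j => flow_net w j, rfl⟩
  have hT_bdd : BddBelow T := by
    refine ⟨0, ?_⟩
    rintro r ⟨ξ, hξnn, -, rfl⟩
    exact Finset.sum_nonneg fun i _ => Finset.sum_nonneg fun j _ =>
      mul_nonneg (hc i j) (hξnn i j)
  have hS_ne : S.Nonempty :=
    ⟨_, fun i j => w j * P j i, w, hξ0nn, hw0, hwy, hwd, fun j => flow_net w j, rfl⟩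
  -- key inequality: every LP-feasible value is at least sInf T - L(w)
  have key : ∀ r ∈ S, sInf T - (∑ i, ∑ j, l i j * P i j * w i) ≤ r := by
    rintro r ⟨ξ, u, hξnn, hu0, huy, hud, hnet, rfl⟩
    have hδ0 : ∀ i, 0 ≤ w i - u i := fun i =>
      sub_nonneg.2 ((hwdef i) ▸ le_min (huy i) (hud i))
    set δ : Fin n → ℝ := fun i => w i - u i with hδdef
    have hδ0' : ∀ i, 0 ≤ δ i := hδ0
    -- augmented flow
    have hmem : ((∑ i, ∑ j, c i j * ξ i j) + ∑ i, ∑ j, c i j * (δ j * P j i)) ∈ T := by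
      refine ⟨fun i j => ξ i j + δ j * P j i, ?_, ?_, ?_⟩
      · exact fun i j => add_nonneg (hξnn i j) (mul_nonneg (hδ0 j) (hP01 j i).1)
      · intro j
        rw [Finset.sum_add_distrib, Finset.sum_add_distrib]
        have h1 := hnet j
        have h2 := flow_net δ j
        have h3 : (∑ i, P i j * w i) = (∑ i, P i j * u i) + ∑ i, P i j * δ i := by
          rw [← Finset.sum_add_distrib]
          refine Finset.sum_congr rfl fun i _ => ?_
          have : δ i = w i - u i := rfl
          rw [this]; ring
        have h4 : δ j = w j - u j := rfl
        linarith
      · rw [← Finset.sum_add_distrib]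
        refine Finset.sum_congr rfl fun i _ => ?_
        rw [← Finset.sum_add_distrib]
        exact Finset.sum_congr rfl fun j _ => by ring
    have h5 : sInf T ≤ (∑ i, ∑ j, c i j * ξ i j) + ∑ i, ∑ j, c i j * (δ j * P j i) :=
      csInf_le hT_bdd hmem
    have h6 := flow_cost δ hδ0'
    have h7 : (∑ i, ∑ j, l i j * P i j * δ i)
        = (∑ i, ∑ j, l i j * P i j * w i) - ∑ i, ∑ j, l i j * P i j * u i := by
      rw [← Finset.sum_sub_distrib]
      refine Finset.sum_congr rfl fun i _ => ?_
      rw [← Finset.sum_sub_distrib]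
      refine Finset.sum_congr rfl fun j _ => ?_
      have : δ i = w i - u i := rfl
      rw [this]; ring
    linarith
  have hS_bdd : BddBelow S := ⟨_, key⟩
  refine le_antisymm ?_ (le_csInf hS_ne key)
  have h8 : sInf S + (∑ i, ∑ j, l i j * P i j * w i) ≤ sInf T := by
    refine le_csInf hT_ne ?_
    rintro r ⟨ξ, hξnn, hnet, rfl⟩
    have hmem : ((∑ i, ∑ j, c i j * ξ i j) - ∑ i, ∑ j, l i j * P i j * w i) ∈ S :=
      ⟨ξ, w, hξnn, hw0, hwy, hwd, hnet, rfl⟩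
    have := csInf_le hS_bdd hmem
    linarith
  linarith

theorem stmt4 (n : ℕ) (hn : 1 ≤ n)
    (c l : Fin n → Fin n → ℝ)
    (hc : ∀ i j, 0 ≤ c i j) (hl : ∀ i j, 0 ≤ l i j)
    (d : Fin n → ℝ) (hd : ∀ i, 0 ≤ d i)
    (P : Fin n → Fin n → ℝ) (hP : RowStochastic P)
    (hcost : ∀ j, (∑ i, P j i * c i j) ≤ ∑ i, l j i * P j i)
    (y : Fin n → ℝ) (hy : ∀ i, 0 ≤ y i) :
    LPval c l d P y
      = repoCost c
          (fun j => min (y j) (d j) - ∑ i, P i j * min (y i) (d i))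
        - ∑ i, ∑ j, l i j * P i j * min (y i) (d i) := by
  exact aux4 n c l hc d hd P hP.1 hP.2 hcost y hy
    (fun i => min (y i) (d i)) (fun i => rfl)
end

section
/- Let n ≥ 1, let d ∈ ℝ_{≥0}^n, let P ∈ [0,1]^{n×n} be row-stochastic, and let c = (c_{ij}), l = (l_{ij}) be nonnegative and satisfy the cost condition: ∑_{i=1}^n l_{ji} P_{ji} ≥ ∑_{i=1}^n P_{ji} c_{ij} for every j. For y' ∈ ℝ_{≥0}^n define the surrogate cost S(y') = M_c(min(y',d) − Pᵀ min(y',d)) − ∑_{i,j=1}^n l_{ij} P_{ij} min(d_i, y'_i), where min is componentwise. Fix y ∈ ℝ_{≥0}^n and suppose λ, π ∈ ℝ^n satisfy: π_j − π_i ≤ c_{ij} for all i,j; −π_i + ∑_{j=1}^n P_{ij} π_j + λ_i ≤ −∑_{j=1}^n l_{ij} P_{ij} for all i; λ_i ≤ 0 for all i; and ∑_{i=1}^n λ_i · min(y_i, d_i) = S(y) (dual feasibility and strong duality). Define g ∈ ℝ^n by g_i = λ_i if y_i ≤ d_i and g_i = 0 otherwise. Then g is a subgradient of S at y: for every y' ∈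 ℝ_{≥0}^n, S(y') ≥ S(y) + ∑_{i=1}^n g_i (y'_i − y_i). -/
/-- The surrogate cost
`S(y) = M_c(min(y,d) − Pᵀ min(y,d)) − ∑_{i,j} l_{ij} P_{ij} min(d_i, y_i)`. -/
noncomputable def surr {n : ℕ} (c l : Fin n → Fin n → ℝ)
    (d : Fin n → ℝ) (P : Fin n → Fin n → ℝ) (y : Fin n → ℝ) : ℝ :=
  repoCost c (fun j => min (y j) (d j) - ∑ i, P i j * min (y i) (d i))
    - ∑ i, ∑ j, l i j * P i j * min (d i) (y i)

theorem stmt5 (n : ℕ) (hn : 1 ≤ n)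
    (c l : Fin n → Fin n → ℝ)
    (hc : ∀ i j, 0 ≤ c i j) (hl : ∀ i j, 0 ≤ l i j)
    (d : Fin n → ℝ) (hd : ∀ i, 0 ≤ d i)
    (P : Fin n → Fin n → ℝ) (hP : RowStochastic P)
    (hcost : ∀ j, (∑ i, P j i * c i j) ≤ ∑ i, l j i * P j i)
    (y : Fin n → ℝ) (hy : ∀ i, 0 ≤ y i)
    (lam pi : Fin n → ℝ)
    (hpi : ∀ i j, pi j - pi i ≤ c i j)
    (hfeas : ∀ i, -pi i + (∑ j, P i j * pi j) + lam i ≤ -(∑ j, l i j * P i j))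
    (hlam : ∀ i, lam i ≤ 0)
    (hstrong : (∑ i, lam i * min (y i) (d i)) = surr c l d P y) :
    ∀ y' : Fin n → ℝ, (∀ i, 0 ≤ y' i) →
      surr c l d P y'
        ≥ surr c l d P y
          + ∑ i, (if y i ≤ d i then lam i else 0) * (y' i - y i) := by
  intro y' hy'
  set w : Fin n → ℝ := fun i => min (y' i) (d i) with hwdef
  have hw0 : ∀ i, 0 ≤ w i := fun i => le_min (hy' i) (hd i)
  have hPnn : ∀ i j, 0 ≤ P i j := fun i j => (hP.1 i j).1
  -- weak duality for repoCost
  have hweak : (∑ j, pi j * (w j - ∑ i, P i j * w i))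
      ≤ repoCost c (fun j => w j - ∑ i, P i j * w i) := by
    apply le_csInf
    · refine ⟨∑ i, ∑ j, c i j * (P j i * w j), fun i j => P j i * w j,
        fun i j => mul_nonneg (hPnn j i) (hw0 j), fun j => ?_, rfl⟩
      have h1 : (∑ i, P j i * w j) = w j := by
        rw [← Finset.sum_mul, hP.2 j, one_mul]
      simp only []
      rw [h1]
    · rintro r ⟨ξ, hξ0, hbal, rfl⟩
      have key : (∑ j, pi j * (w j - ∑ i, P i j * w i))
          = ∑ i, ∑ j, (pi j - pi i) * ξ i j := by
        have hh : ∀ j, pi j * (w j - ∑ i, P i j * w i)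
            = pi j * (∑ i, ξ i j) - pi j * (∑ k, ξ j k) := by
          intro j; rw [← mul_sub, hbal j]
        rw [Finset.sum_congr rfl fun j _ => hh j, Finset.sum_sub_distrib]
        have h2 : (∑ j, pi j * ∑ i, ξ i j) = ∑ i, ∑ j, pi j * ξ i j := by
          rw [Finset.sum_comm (f := fun i j => pi j * ξ i j)]
          exact Finset.sum_congr rfl fun j _ => Finset.mul_sum _ _ _
        have h3 : (∑ j, pi j * ∑ k, ξ j k) = ∑ i, ∑ j, pi i * ξ i j :=
          Finset.sum_congr rfl fun j _ => Finset.mul_sum _ _ _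
        rw [h2, h3, ← Finset.sum_sub_distrib]
        refine Finset.sum_congr rfl fun i _ => ?_
        rw [← Finset.sum_sub_distrib]
        exact Finset.sum_congr rfl fun j _ => by ring
      rw [key]
      exact Finset.sum_le_sum fun i _ => Finset.sum_le_sum fun j _ =>
        mul_le_mul_of_nonneg_right (hpi i j) (hξ0 i j)
  -- rewrite dual value
  have hdual : (∑ j, pi j * (w j - ∑ i, P i j * w i))
      = ∑ i, (pi i - ∑ j, P i j * pi j) * w i := by
    have h2 : (∑ j, pi j * ∑ i, P i j * w i) = ∑ i, (∑ j, P i j * pi j) * w i := by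
      calc (∑ j, pi j * ∑ i, P i j * w i)
          = ∑ j, ∑ i, pi j * (P i j * w i) :=
            Finset.sum_congr rfl fun j _ => Finset.mul_sum _ _ _
        _ = ∑ i, ∑ j, pi j * (P i j * w i) := Finset.sum_comm
        _ = ∑ i, (∑ j, P i j * pi j) * w i := by
            refine Finset.sum_congr rfl fun i _ => ?_
            rw [Finset.sum_mul]
            exact Finset.sum_congr rfl fun j _ => by ring
    have h1 : ∀ j, pi j * (w j - ∑ i, P i j * w i)
        = pi j * w j - pi j * ∑ i, P i j * w i := fun j => mul_sub _ _ _
    rw [Finset.sum_congr rfl fun j _ => h1 j, Finset.sum_sub_distrib, h2,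
      ← Finset.sum_sub_distrib]
    exact Finset.sum_congr rfl fun i _ => by ring
  -- lower bound for surr at y'
  have hlow : (∑ i, lam i * w i) ≤ surr c l d P y' := by
    have hmin : ∀ i, min (d i) (y' i) = w i := fun i => min_comm _ _
    have hsurr : surr c l d P y'
        = repoCost c (fun j => w j - ∑ i, P i j * w i)
          - ∑ i, (∑ j, l i j * P i j) * w i := by
      unfold surr
      congr 1
      refine Finset.sum_congr rfl fun i _ => ?_
      rw [Finset.sum_mul]
      exact Finset.sum_congr rfl fun j _ => by rw [hmin i]
    rw [hsurr]
    have hstep : (∑ i, lam i * w i)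
        ≤ ∑ i, (pi i - ∑ j, P i j * pi j - ∑ j, l i j * P i j) * w i := by
      refine Finset.sum_le_sum fun i _ => mul_le_mul_of_nonneg_right ?_ (hw0 i)
      have := hfeas i
      linarith
    calc (∑ i, lam i * w i)
        ≤ ∑ i, (pi i - ∑ j, P i j * pi j - ∑ j, l i j * P i j) * w i := hstep
      _ = (∑ i, (pi i - ∑ j, P i j * pi j) * w i) - ∑ i, (∑ j, l i j * P i j) * w i := by
          rw [← Finset.sum_sub_distrib]
          exact Finset.sum_congr rfl fun i _ => by ring
      _ ≤ repoCost c (fun j => w j - ∑ i, P i j * w i) - ∑ i, (∑ j, l i j * P i j) * w i := by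
          rw [← hdual]; linarith
  -- per-coordinate subgradient inequality
  have hcoord : ∀ i, lam i * min (y i) (d i) + (if y i ≤ d i then lam i else 0) * (y' i - y i)
      ≤ lam i * w i := by
    intro i
    by_cases h : y i ≤ d i
    · simp only [if_pos h, min_eq_left h]
      have hwle : w i ≤ y' i := min_le_left _ _
      nlinarith [hlam i]
    · simp only [if_neg h]
      have : min (y i) (d i) = d i := min_eq_right (le_of_not_ge h)
      rw [this]
      have hwle : w i ≤ d i := min_le_right _ _
      nlinarith [hlam i]
  have : surr c l d P y + ∑ i, (if y i ≤ d i then lam i else 0) * (y' i - y i)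
      ≤ ∑ i, lam i * w i := by
    rw [← hstrong, ← Finset.sum_add_distrib]
    exact Finset.sum_le_sum fun i _ => hcoord i
  linarith
end

section
/- Let n ≥ 1, T ≥ 1, and let c = (c_{ij}), l = (l_{ij}) be nonnegative with c_max := max_{i,j} c_{ij}, l_max := max_{i,j} l_{ij}, and c_max + l_max > 0. Let d₁,…,d_T ∈ [0,1]^n and let P₁,…,P_T ∈ [0,1]^{n×n} be row-stochastic. Fix x₁ ∈ Δ_{n−1}. For S ∈ Δ_{n−1} define the base-stock trajectory x₁^S = x₁ and x_{t+1}^S = (S − d_t)^+ + P_tᵀ min(S, d_t) for t = 1,…,T. For t = 1,…,T define the surrogate cost f_t(y) = M_c(min(y,d_t) − P_tᵀ min(y,d_t)) − ∑_{i,j=1}^n l_{ij} P_{t,ij} min(d_{t,i}, y_i). Let S₁ ∈ Δ_{n−1}, and suppose for each t = 1,…,T: g_t ∈ ℝ^n satisfies ‖g_t‖₂ ≤ n²(c_max + l_max) and f_t(y) ≥ f_t(S_t) + ⟨g_t, y − S_t⟩ for all y ∈ Δ_{n−1}; and S_{t+1} ∈ Δ_{n−1} satisfies ‖S_{t+1}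 − (S_t − η_t g_t)‖₂ ≤ ‖z − (S_t − η_t g_t)‖₂ for all z ∈ Δ_{n−1}, where η_t = 2/(n²(c_max + l_max)√t). Define the algorithm trajectory x₁^{alg} = x₁ and x_{t+1}^{alg} = (S_t − d_t)^+ + P_tᵀ min(S_t, d_t). Then for every S ∈ Δ_{n−1}: ∑_{t=1}^T C̃(x_t^{alg}, S_t, d_t, P_t) − ∑_{t=1}^T C̃(x_t^S, S, d_t, P_t) ≤ 20 · n^{5/2} · (1 + c_max + l_max)² · √T. -/
/-- The modified one-period cost
`C̃(x, y, d, P) = M_c(y − x) − ∑_{i,j} l_{ij} P_{ij} min(d_i, y_i)`. -/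
noncomputable def Ctilde {n : ℕ} (c l : Fin n → Fin n → ℝ)
    (x y d : Fin n → ℝ) (P : Fin n → Fin n → ℝ) : ℝ :=
  repoCost c (fun i => y i - x i) - ∑ i, ∑ j, l i j * P i j * min (d i) (y i)

/-!
The regret splits period by period as `C̃(x, y) = f(y) + (M_c(y - x) - M_c(w(y)))`, where
`w(y) = min(y, d) - Pᵀ min(y, d)` is the net effect of the rentals, so that the next state is
`y - w(y)`. The surrogate parts form the regret of projected online subgradient descent on the
simplex (squared diameter `2`, steps `2 / (G √t)`), which is at most `(5/2) G √T`.
The remainders telescope. For the base-stock policy `M_c(S - x_{t+1}) = M_c(w_t(S))` exactly,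
leaving `M_c(S - x_1) - M_c(w_T(S)) ≥ -2 c_max`. For the algorithm, subadditivity of `M_c` gives
`M_c(S_{t+1} - x_{t+1}) ≤ M_c(S_{t+1} - S_t) + M_c(w_t(S_t))`, and `M_c(v) ≤ c_max √n ‖v‖₂`
together with the step bound `‖S_{t+1} - S_t‖₂ ≤ 4 / √t` caps the repositioning moves at
`8 c_max √n √T`.
-/

open Finset
open scoped RealInnerProductSpace Pointwise

section RepositioningCost

variable {n : ℕ} {c : Fin n → Fin n → ℝ}

def flowCosts (c : Fin n → Fin n → ℝ) (v : Fin n → ℝ) : Set ℝ :=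
  {r : ℝ | ∃ ξ : Fin n → Fin n → ℝ, (∀ i j, 0 ≤ ξ i j) ∧
    (∀ j, (∑ i, ξ i j) - (∑ k, ξ j k) = v j) ∧ r = ∑ i, ∑ j, c i j * ξ i j}

theorem repoCost_eq_sInf (c : Fin n → Fin n → ℝ) (v : Fin n → ℝ) :
    repoCost c v = sInf (flowCosts c v) := rfl

theorem flowCosts_nonneg (hc : ∀ i j, 0 ≤ c i j) {v : Fin n → ℝ} :
    ∀ r ∈ flowCosts c v, 0 ≤ r := by
  rintro r ⟨ξ, hξ, -, rfl⟩
  exact sum_nonneg fun i _ => sum_nonneg fun j _ => mul_nonneg (hc i j) (hξ i j)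

theorem bddBelow_flowCosts (hc : ∀ i j, 0 ≤ c i j) (v : Fin n → ℝ) :
    BddBelow (flowCosts c v) :=
  ⟨0, flowCosts_nonneg hc⟩

theorem repoCost_nonneg (hc : ∀ i j, 0 ≤ c i j) (v : Fin n → ℝ) : 0 ≤ repoCost c v :=
  Real.sInf_nonneg (flowCosts_nonneg hc)

theorem add_flowCosts_subset (u v : Fin n → ℝ) :
    flowCosts c u + flowCosts c v ⊆ flowCosts c (u + v) := by
  rintro _ ⟨_, ⟨ξ, hξ, hξu, rfl⟩, _, ⟨ζ, hζ, hζv, rfl⟩, rfl⟩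
  refine ⟨ξ + ζ, fun i j => add_nonneg (hξ i j) (hζ i j), fun j => ?_, ?_⟩
  · simp only [Pi.add_apply, sum_add_distrib]
    linarith [hξu j, hζv j]
  · simp only [Pi.add_apply, mul_add, sum_add_distrib]

/-- The hub `h` supplies every node `j` with `(v j)⁺` and collects `(v i)⁻` from every node `i`. -/
def hubFlow (h : Fin n) (v : Fin n → ℝ) (i j : Fin n) : ℝ :=
  (if i = h then (v j)⁺ else 0) + (if j = h then (v i)⁻ else 0)

theorem hubFlow_cost_mem_flowCosts (h : Fin n) {v : Fin n → ℝ} (hv : ∑ j, v j = 0) :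
    ∑ i, ∑ j, c i j * hubFlow h v i j ∈ flowCosts c v := by
  refine ⟨hubFlow h v, fun i j => by unfold hubFlow; positivity, fun j => ?_, rfl⟩
  have hbal : ∑ i, (v i)⁻ = ∑ i, (v i)⁺ := by
    have hsum := sum_congr rfl fun i (_ : i ∈ univ) => posPart_sub_negPart (v i)
    rw [sum_sub_distrib] at hsum
    linarith
  by_cases hj : j = h
  · subst hj
    simp only [hubFlow, ↓reduceIte, sum_add_distrib, sum_ite_eq', mem_univ, hbal]
    linarith [posPart_sub_negPart (v j)]
  · simp [hubFlow, hj, posPart_sub_negPart]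

theorem hubFlow_sum (h : Fin n) (v : Fin n → ℝ) :
    ∑ i, ∑ j, hubFlow h v i j = ∑ i, |v i| := by
  simp [hubFlow, sum_add_distrib, ← posPart_add_negPart]

theorem repoCost_le_mul_sum_abs [NeZero n] (hc : ∀ i j, 0 ≤ c i j) {cmax : ℝ}
    (hcmax : ∀ i j, c i j ≤ cmax) {v : Fin n → ℝ} (hv : ∑ j, v j = 0) :
    repoCost c v ≤ cmax * ∑ i, |v i| := by
  have hξ : ∀ i j, 0 ≤ hubFlow 0 v i j := fun i j => by unfold hubFlow; positivity
  calc repoCost c v ≤ ∑ i, ∑ j, c i j * hubFlow 0 v i j :=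
        csInf_le (bddBelow_flowCosts hc v) (hubFlow_cost_mem_flowCosts 0 hv)
    _ ≤ ∑ i, ∑ j, cmax * hubFlow 0 v i j := by gcongr with i _ j _; exacts [hξ i j, hcmax i j]
    _ = cmax * ∑ i, |v i| := by simp only [← mul_sum, hubFlow_sum]

theorem repoCost_add_le [NeZero n] (hc : ∀ i j, 0 ≤ c i j) {u v : Fin n → ℝ}
    (hu : ∑ j, u j = 0) (hv : ∑ j, v j = 0) :
    repoCost c (u + v) ≤ repoCost c u + repoCost c v := by
  have hne : ∀ {w : Fin n → ℝ}, ∑ j, w j = 0 → (flowCosts c w).Nonempty :=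
    fun hw => ⟨_, hubFlow_cost_mem_flowCosts 0 hw⟩
  rw [repoCost_eq_sInf, repoCost_eq_sInf, repoCost_eq_sInf,
    ← csInf_add (hne hu) (bddBelow_flowCosts hc u) (hne hv) (bddBelow_flowCosts hc v)]
  exact csInf_le_csInf (bddBelow_flowCosts hc _) ((hne hu).add (hne hv)) (add_flowCosts_subset u v)

end RepositioningCost

section Simplex

variable {n : ℕ} {x y : Fin n → ℝ}

theorem sum_sub_eq_zero_of_mem_stdSimplex (hx : x ∈ stdSimplex ℝ (Fin n))
    (hy : y ∈ stdSimplex ℝ (Fin n)) : ∑ i, (x - y) i = 0 := by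
  simp only [Pi.sub_apply, sum_sub_distrib, hx.2, hy.2, sub_self]

theorem sum_abs_sub_le_two_of_mem_stdSimplex (hx : x ∈ stdSimplex ℝ (Fin n))
    (hy : y ∈ stdSimplex ℝ (Fin n)) : ∑ i, |x i - y i| ≤ 2 :=
  calc ∑ i, |x i - y i| ≤ ∑ i, (x i + y i) :=
        sum_le_sum fun i _ => abs_sub_le_of_nonneg_of_le (hx.1 i) (le_add_of_nonneg_right (hy.1 i))
          (hy.1 i) (le_add_of_nonneg_left (hx.1 i))
    _ = 2 := by rw [sum_add_distrib, hx.2, hy.2]; norm_num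

theorem sum_sq_sub_le_two_of_mem_stdSimplex (hx : x ∈ stdSimplex ℝ (Fin n))
    (hy : y ∈ stdSimplex ℝ (Fin n)) : ∑ i, (x i - y i) ^ 2 ≤ 2 := by
  refine le_trans (sum_le_sum fun i _ => ?_) (sum_abs_sub_le_two_of_mem_stdSimplex hx hy)
  have hxi := mem_Icc_of_mem_stdSimplex hx i
  have hyi := mem_Icc_of_mem_stdSimplex hy i
  rw [← sq_abs]
  exact pow_le_of_le_one (abs_nonneg _)
    (abs_sub_le_of_nonneg_of_le hxi.1 hxi.2 hyi.1 hyi.2) two_ne_zero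

end Simplex

section EuclideanNorm

variable {n : ℕ}

theorem l2Norm_eq_norm (v : Fin n → ℝ) : l2Norm v = ‖WithLp.toLp 2 v‖ := by
  simp [l2Norm, EuclideanSpace.norm_eq]

theorem sum_abs_le_sqrt_mul_l2Norm (v : Fin n → ℝ) : ∑ i, |v i| ≤ √(n : ℝ) * l2Norm v := by
  rw [l2Norm, ← Real.sqrt_mul (Nat.cast_nonneg n)]
  refine Real.le_sqrt_of_sq_le ?_
  simpa using sq_sum_le_card_mul_sum_sq (s := univ) (f := fun i => |v i|)

end EuclideanNorm

section Rentals

variable {n : ℕ} (d : Fin n → ℝ) (P : Fin n → Fin n → ℝ) (y : Fin n → ℝ)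

/-- The net inventory change `min(y, d) - Pᵀ min(y, d)` caused by one period of rentals from the
stock `y`: the `min (y i) (d i)` units rented at `i` leave and return spread out according to `P`. -/
def netRentals : Fin n → ℝ := fun j => min (y j) (d j) - ∑ i, P i j * min (y i) (d i)

theorem Ctilde_eq_surr_add (c l : Fin n → Fin n → ℝ) (x : Fin n → ℝ) :
    Ctilde c l x y d P = surr c l d P y + (repoCost c (y - x) - repoCost c (netRentals d P y)) := by
  change repoCost c (y - x) - _ = repoCost c (netRentals d P y) - _ + _
  ring

variable {d P y}

theorem sub_eq_netRentals {x : Fin n → ℝ}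
    (hx : ∀ i, x i = max (y i - d i) 0 + ∑ j, P j i * min (y j) (d j)) :
    y - x = netRentals d P y := by
  ext i
  have hmin : y i - max (y i - d i) 0 = min (y i) (d i) := by
    rcases le_total (y i) (d i) with h | h <;> simp [h]
  rw [Pi.sub_apply, hx i, netRentals, ← hmin]
  ring

theorem sum_sum_mul_eq_of_sum_eq_one {P : Fin n → Fin n → ℝ} (hP : ∀ i, ∑ j, P i j = 1)
    (m : Fin n → ℝ) : ∑ j, ∑ i, P i j * m i = ∑ i, m i := by
  rw [sum_comm]
  simp only [← sum_mul, hP, one_mul]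

theorem sum_netRentals (hP : ∀ i, ∑ j, P i j = 1) : ∑ j, netRentals d P y j = 0 := by
  simp only [netRentals, sum_sub_distrib, sum_sum_mul_eq_of_sum_eq_one hP, sub_self]

theorem repoCost_netRentals_le [NeZero n] {c : Fin n → Fin n → ℝ} (hc : ∀ i j, 0 ≤ c i j)
    {cmax : ℝ} (hcmax : ∀ i j, c i j ≤ cmax) (hP : RowStochastic P) (hd : ∀ i, 0 ≤ d i)
    (hy : y ∈ stdSimplex ℝ (Fin n)) : repoCost c (netRentals d P y) ≤ 2 * cmax := by
  have hm : ∀ i, 0 ≤ min (y i) (d i) := fun i => le_min (hy.1 i) (hd i)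
  have hrented : ∑ i, min (y i) (d i) ≤ 1 := hy.2 ▸ sum_le_sum fun i _ => min_le_left _ _
  have habs : ∑ j, |netRentals d P y j| ≤ 2 := by
    calc ∑ j, |netRentals d P y j|
        ≤ ∑ j, (min (y j) (d j) + ∑ i, P i j * min (y i) (d i)) := by
          refine sum_le_sum fun j _ => abs_sub_le_iff.2 ⟨?_, ?_⟩ <;>
            linarith [hm j, sum_nonneg fun i (_ : i ∈ univ) => mul_nonneg (hP.1 i j).1 (hm i)]
      _ ≤ 2 := by rw [sum_add_distrib, sum_sum_mul_eq_of_sum_eq_one hP.2]; linarith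
  have hc0 : 0 ≤ cmax := (hc 0 0).trans (hcmax 0 0)
  calc repoCost c (netRentals d P y) ≤ cmax * ∑ j, |netRentals d P y j| :=
        repoCost_le_mul_sum_abs hc hcmax (sum_netRentals hP.2)
    _ ≤ 2 * cmax := by nlinarith

theorem repoCost_sub_repoCost_netRentals_le [NeZero n] {c : Fin n → Fin n → ℝ}
    (hc : ∀ i j, 0 ≤ c i j) {cmax : ℝ} (hcmax : ∀ i j, c i j ≤ cmax) (hP : ∀ i, ∑ j, P i j = 1)
    {y' x' : Fin n → ℝ} (hy : y ∈ stdSimplex ℝ (Fin n))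
    (hy' : y' ∈ stdSimplex ℝ (Fin n))
    (hx' : ∀ i, x' i = max (y i - d i) 0 + ∑ j, P j i * min (y j) (d j)) :
    repoCost c (y' - x') - repoCost c (netRentals d P y) ≤ cmax * √(n : ℝ) * l2Norm (y' - y) := by
  have hsplit : y' - x' = (y' - y) + netRentals d P y := by
    rw [← sub_eq_netRentals hx']; abel
  have hc0 : 0 ≤ cmax := (hc 0 0).trans (hcmax 0 0)
  have hmove := sum_sub_eq_zero_of_mem_stdSimplex hy' hy
  calc repoCost c (y' - x') - repoCost c (netRentals d P y) ≤ repoCost c (y' - y) := by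
        rw [hsplit, sub_le_iff_le_add]
        exact repoCost_add_le hc hmove (sum_netRentals hP)
    _ ≤ cmax * ∑ i, |(y' - y) i| := repoCost_le_mul_sum_abs hc hcmax hmove
    _ ≤ cmax * √(n : ℝ) * l2Norm (y' - y) := by
        rw [mul_assoc]; gcongr; exact sum_abs_le_sqrt_mul_l2Norm _

end Rentals

theorem sum_Icc_sub_eq_add_sum_Ico (R W : ℕ → ℝ) {T : ℕ} (hT : 1 ≤ T) :
    ∑ t ∈ Icc 1 T, (R t - W t) = R 1 - W T + ∑ t ∈ Ico 1 T, (R (t + 1) - W t) := by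
  induction T, hT using Nat.le_induction with
  | base => simp
  | succ T hT ih =>
    rw [sum_Icc_succ_top (by omega), sum_Ico_succ_top hT, ih]
    ring

theorem sum_Icc_inv_sqrt_le (T : ℕ) : ∑ t ∈ Icc 1 T, 1 / √(t : ℝ) ≤ 2 * √(T : ℝ) := by
  induction T with
  | zero => simp
  | succ T ih =>
    rw [sum_Icc_succ_top (by omega)]
    have hsq : √((T + 1 : ℕ) : ℝ) ^ 2 = √(T : ℝ) ^ 2 + 1 := by
      rw [Real.sq_sqrt (by positivity), Real.sq_sqrt (by positivity)]; push_cast; ring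
    have hpos : 0 < √((T + 1 : ℕ) : ℝ) := Real.sqrt_pos.2 (by positivity)
    -- `1 / b ≤ 2 (b - a)` because `2 b (b - a) - 1 = (b - a)²` when `b² = a² + 1`
    have hstep : 1 / √((T + 1 : ℕ) : ℝ) ≤ 2 * (√((T + 1 : ℕ) : ℝ) - √(T : ℝ)) := by
      rw [div_le_iff₀ hpos]
      nlinarith [sq_nonneg (√((T + 1 : ℕ) : ℝ) - √(T : ℝ))]
    linarith

theorem sum_Icc_mul_sub_succ_le {a b : ℕ → ℝ} {A : ℝ} {T : ℕ} (hb : Monotone b)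
    (hb0 : ∀ t, 0 ≤ b t) (ha : ∀ t ∈ Icc 1 (T + 1), a t ∈ Set.Icc 0 A) :
    ∑ t ∈ Icc 1 T, b t * (a t - a (t + 1)) ≤ A * b T := by
  suffices h : ∑ t ∈ Icc 1 T, b t * (a t - a (t + 1)) ≤ A * b T - b T * a (T + 1) by
    nlinarith [hb0 T, (ha (T + 1) (by simp)).1]
  induction T with
  | zero =>
    have := ha 1 (by simp)
    rw [Icc_eq_empty (by omega), sum_empty]
    nlinarith [hb0 0, this.2]
  | succ T ih =>
    rw [sum_Icc_succ_top (by omega)]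
    have hT := ih fun t ht => ha t (Icc_subset_Icc_right (by omega) ht)
    have haT := ha (T + 1) (by simp)
    nlinarith [mul_nonpos_of_nonneg_of_nonpos (sub_nonneg.2 (hb T.le_succ)) (sub_nonpos.2 haT.2)]

section Telescoping

variable {n : ℕ} [NeZero n] {c : Fin n → Fin n → ℝ} {cmax : ℝ}
  {d : ℕ → Fin n → ℝ} {P : ℕ → Fin n → Fin n → ℝ} {T : ℕ}

theorem sum_repoCost_sub_le_of_steps (hc : ∀ i j, 0 ≤ c i j) (hcmax : ∀ i j, c i j ≤ cmax)
    (hT : 1 ≤ T) {S x : ℕ → Fin n → ℝ} {δ : ℝ}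
    (hP : ∀ t, 1 ≤ t → t ≤ T → ∀ i, ∑ j, P t i j = 1)
    (hS : ∀ t, 1 ≤ t → t ≤ T + 1 → S t ∈ stdSimplex ℝ (Fin n))
    (hx1 : x 1 ∈ stdSimplex ℝ (Fin n))
    (hx : ∀ t, 1 ≤ t → t ≤ T → ∀ i,
      x (t + 1) i = max (S t i - d t i) 0 + ∑ j, P t j i * min (S t j) (d t j))
    (hstep : ∀ t, 1 ≤ t → t ≤ T → l2Norm (S (t + 1) - S t) ≤ δ / √(t : ℝ)) :
    ∑ t ∈ Icc 1 T, (repoCost c (S t - x t) - repoCost c (netRentals (d t) (P t) (S t)))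
      ≤ 2 * cmax + 2 * δ * cmax * √(n : ℝ) * √(T : ℝ) := by
  have hc0 : 0 ≤ cmax := (hc 0 0).trans (hcmax 0 0)
  have hδ : 0 ≤ δ := by simpa using (Real.sqrt_nonneg _).trans (hstep 1 le_rfl hT)
  have hfirst : repoCost c (S 1 - x 1) ≤ 2 * cmax := by
    have hS1 := hS 1 le_rfl (by omega)
    calc repoCost c (S 1 - x 1) ≤ cmax * ∑ i, |S 1 i - x 1 i| :=
          repoCost_le_mul_sum_abs hc hcmax (sum_sub_eq_zero_of_mem_stdSimplex hS1 hx1)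
      _ ≤ cmax * 2 := by gcongr; exact sum_abs_sub_le_two_of_mem_stdSimplex hS1 hx1
      _ = 2 * cmax := mul_comm _ _
  have hmoves : ∑ t ∈ Ico 1 T, (repoCost c (S (t + 1) - x (t + 1))
        - repoCost c (netRentals (d t) (P t) (S t)))
      ≤ ∑ t ∈ Icc 1 T, cmax * √(n : ℝ) * δ * (1 / √(t : ℝ)) := by
    refine (sum_le_sum fun t ht => ?_).trans
      (sum_le_sum_of_subset_of_nonneg Ico_subset_Icc_self fun _ _ _ => by positivity)
    obtain ⟨ht1, htT⟩ := mem_Ico.1 ht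
    refine (repoCost_sub_repoCost_netRentals_le hc hcmax (hP t ht1 htT.le)
      (hS t ht1 (by omega)) (hS (t + 1) (by omega) (by omega)) (hx t ht1 htT.le)).trans ?_
    rw [mul_assoc _ δ, mul_one_div]
    gcongr
    exact hstep t ht1 htT.le
  rw [← mul_sum] at hmoves
  have hsum := mul_le_mul_of_nonneg_left (sum_Icc_inv_sqrt_le T)
    (by positivity : 0 ≤ cmax * √(n : ℝ) * δ)
  rw [sum_Icc_sub_eq_add_sum_Ico _ _ hT]
  linarith [repoCost_nonneg hc (netRentals (d T) (P T) (S T))]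

theorem neg_two_mul_le_sum_repoCost_sub_baseStock (hc : ∀ i j, 0 ≤ c i j)
    (hcmax : ∀ i j, c i j ≤ cmax) (hT : 1 ≤ T) {s : Fin n → ℝ} {x : ℕ → Fin n → ℝ}
    (hs : s ∈ stdSimplex ℝ (Fin n)) (hdT : ∀ i, 0 ≤ d T i) (hPT : RowStochastic (P T))
    (hx : ∀ t, 1 ≤ t → t ≤ T → ∀ i,
      x (t + 1) i = max (s i - d t i) 0 + ∑ j, P t j i * min (s j) (d t j)) :
    -(2 * cmax)
      ≤ ∑ t ∈ Icc 1 T, (repoCost c (s - x t) - repoCost c (netRentals (d t) (P t) s)) := by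
  have hsteady : ∑ t ∈ Ico 1 T, (repoCost c (s - x (t + 1))
      - repoCost c (netRentals (d t) (P t) s)) = 0 :=
    sum_eq_zero fun t ht => by
      rw [sub_eq_netRentals (hx t (mem_Ico.1 ht).1 (mem_Ico.1 ht).2.le), sub_self]
  rw [sum_Icc_sub_eq_add_sum_Ico _ _ hT, hsteady]
  linarith [repoCost_nonneg hc (s - x 1), repoCost_netRentals_le hc hcmax hPT hdT hs]

end Telescoping

theorem norm_sub_le_two_mul_of_isMinOn {E : Type*} [SeminormedAddCommGroup E] {K : Set E}
    {u v w : E} (hmin : IsMinOn (fun z => ‖z - u‖) K v)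
    (hw : w ∈ K) : ‖v - w‖ ≤ 2 * ‖w - u‖ :=
  calc ‖v - w‖ ≤ ‖v - u‖ + ‖w - u‖ := norm_sub_le_norm_sub_add_norm_sub v u w |>.trans_eq
        (by rw [norm_sub_rev u])
    _ ≤ 2 * ‖w - u‖ := by linarith [isMinOn_iff.1 hmin w hw]

section ProjectedGradient

variable {E : Type*} [NormedAddCommGroup E] [InnerProductSpace ℝ E] {K : Set E}

theorem norm_sub_le_norm_sub_of_isMinOn (hK : Convex ℝ K) {u v w : E} (hv : v ∈ K)
    (hmin : IsMinOn (fun z => ‖z - u‖) K v) (hw : w ∈ K) : ‖v - w‖ ≤ ‖u - w‖ := by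
  have : Nonempty K := ⟨⟨v, hv⟩⟩
  have hinf : ‖u - v‖ = ⨅ z : K, ‖u - z‖ := by
    refine le_antisymm (le_ciInf fun z => ?_) (ciInf_le ⟨0, ?_⟩ (⟨v, hv⟩ : K))
    · rw [norm_sub_rev u, norm_sub_rev u]; exact isMinOn_iff.1 hmin z z.2
    · rintro _ ⟨z, rfl⟩; exact norm_nonneg _
  have hvi := (norm_eq_iInf_iff_real_inner_le_zero hK hv).1 hinf w hw
  have hexp : ‖u - w‖ ^ 2 = ‖u - v‖ ^ 2 - 2 * ⟪u - v, w - v⟫ + ‖v - w‖ ^ 2 := by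
    rw [show u - w = (u - v) - (w - v) by abel, norm_sub_sq_real, norm_sub_rev w]
  nlinarith [norm_nonneg (v - w), norm_nonneg (u - w), sq_nonneg ‖u - v‖]

theorem inner_le_of_isMinOn (hK : Convex ℝ K) {x x' g s : E} {η : ℝ} (hη : 0 < η)
    (hx' : x' ∈ K) (hmin : IsMinOn (fun z => ‖z - (x - η • g)‖) K x') (hs : s ∈ K) :
    ⟪g, x - s⟫ ≤ (‖x - s‖ ^ 2 - ‖x' - s‖ ^ 2) / (2 * η) + η / 2 * ‖g‖ ^ 2 := by
  have hcontr := norm_sub_le_norm_sub_of_isMinOn hK hx' hmin hs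
  have hexp : ‖x - η • g - s‖ ^ 2 = ‖x - s‖ ^ 2 - 2 * η * ⟪g, x - s⟫ + η ^ 2 * ‖g‖ ^ 2 := by
    rw [show x - η • g - s = (x - s) - η • g by abel, norm_sub_sq_real, inner_smul_right,
      norm_smul, real_inner_comm, Real.norm_eq_abs, abs_of_pos hη]
    ring
  rw [div_add' _ _ _ (by positivity), le_div_iff₀ (by positivity)]
  nlinarith [norm_nonneg (x' - s), norm_nonneg (x - η • g - s)]

theorem sum_sub_le_of_projected_subgradient (hK : Convex ℝ K) {f : ℕ → E → ℝ} {x g : ℕ → E}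
    {s : E} {T : ℕ} {η G A : ℝ} (hη : 0 < η) (hs : s ∈ K) (hA : ∀ y ∈ K, ‖y - s‖ ^ 2 ≤ A)
    (hx : ∀ t ∈ Icc 1 (T + 1), x t ∈ K)
    (hsub : ∀ t ∈ Icc 1 T, ∀ y ∈ K, f t (x t) + ⟪g t, y - x t⟫ ≤ f t y)
    (hg : ∀ t ∈ Icc 1 T, ‖g t‖ ≤ G)
    (hmin : ∀ t ∈ Icc 1 T,
      IsMinOn (fun z => ‖z - (x t - (η / √(t : ℝ)) • g t)‖) K (x (t + 1))) :
    ∑ t ∈ Icc 1 T, (f t (x t) - f t s) ≤ (A / (2 * η) + η * G ^ 2) * √(T : ℝ) := by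
  set b : ℕ → ℝ := fun t => √(t : ℝ) / (2 * η)
  have hstep : ∀ t ∈ Icc 1 T, f t (x t) - f t s
      ≤ b t * (‖x t - s‖ ^ 2 - ‖x (t + 1) - s‖ ^ 2) + η * G ^ 2 / 2 * (1 / √(t : ℝ)) := by
    intro t ht
    have hbounds := mem_Icc.1 ht
    have hsqrt : 0 < √(t : ℝ) := Real.sqrt_pos.2 (by exact_mod_cast hbounds.1)
    have hinner := inner_le_of_isMinOn hK (div_pos hη hsqrt)
      (hx (t + 1) (mem_Icc.2 ⟨by omega, by omega⟩)) (hmin t ht) hs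
    have hsub_s := hsub t ht s hs
    rw [← neg_sub (x t) s, inner_neg_right] at hsub_s
    have hgt : ‖g t‖ ^ 2 ≤ G ^ 2 := pow_le_pow_left₀ (norm_nonneg _) (hg t ht) 2
    have hdist : (‖x t - s‖ ^ 2 - ‖x (t + 1) - s‖ ^ 2) / (2 * (η / √(t : ℝ)))
        = b t * (‖x t - s‖ ^ 2 - ‖x (t + 1) - s‖ ^ 2) := by
      simp only [b]; field_simp
    have hgrad : η / √(t : ℝ) / 2 * ‖g t‖ ^ 2 ≤ η * G ^ 2 / 2 * (1 / √(t : ℝ)) := by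
      rw [show η * G ^ 2 / 2 * (1 / √(t : ℝ)) = η / √(t : ℝ) / 2 * G ^ 2 by ring]
      gcongr
    linarith
  have hdiam : ∀ t ∈ Icc 1 (T + 1), ‖x t - s‖ ^ 2 ∈ Set.Icc 0 A :=
    fun t ht => ⟨sq_nonneg _, hA _ (hx t ht)⟩
  have hb : Monotone b := fun t t' htt' => by
    simp only [b]; gcongr
  calc ∑ t ∈ Icc 1 T, (f t (x t) - f t s)
      ≤ ∑ t ∈ Icc 1 T, b t * (‖x t - s‖ ^ 2 - ‖x (t + 1) - s‖ ^ 2)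
        + η * G ^ 2 / 2 * ∑ t ∈ Icc 1 T, 1 / √(t : ℝ) := by
        rw [mul_sum, ← sum_add_distrib]; exact sum_le_sum hstep
    _ ≤ A * b T + η * G ^ 2 / 2 * (2 * √(T : ℝ)) := by
        gcongr
        · exact sum_Icc_mul_sub_succ_le hb (fun t => by positivity) hdiam
        · exact sum_Icc_inv_sqrt_le T
    _ = (A / (2 * η) + η * G ^ 2) * √(T : ℝ) := by simp only [b]; ring

end ProjectedGradient

section SimplexDescent

variable {n : ℕ}

theorem convex_ofLp_preimage_stdSimplex :
    Convex ℝ (WithLp.ofLp ⁻¹' stdSimplex ℝ (Fin n) : Set (EuclideanSpace ℝ (Fin n))) :=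
  (convex_stdSimplex ℝ (Fin n)).linear_preimage (WithLp.linearEquiv 2 ℝ (Fin n → ℝ)).toLinearMap

theorem isMinOn_toLp_of_l2Norm_le {q p : Fin n → ℝ}
    (h : ∀ z ∈ stdSimplex ℝ (Fin n), l2Norm (fun i => q i - p i) ≤ l2Norm (fun i => z i - p i)) :
    IsMinOn (fun z => ‖z - WithLp.toLp 2 p‖) (WithLp.ofLp ⁻¹' stdSimplex ℝ (Fin n))
      (WithLp.toLp 2 q) :=
  isMinOn_iff.2 fun z hz => by
    have := h _ hz
    rwa [l2Norm_eq_norm, l2Norm_eq_norm] at this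

theorem l2Norm_sub_le_of_simplex_step {y y' v : Fin n → ℝ} {G : ℝ} {t : ℕ} (hG : 0 < G)
    (hy : y ∈ stdSimplex ℝ (Fin n)) (hv : l2Norm v ≤ G)
    (h : ∀ z ∈ stdSimplex ℝ (Fin n), l2Norm (fun i => y' i - (y i - 2 / (G * √(t : ℝ)) * v i))
      ≤ l2Norm (fun i => z i - (y i - 2 / (G * √(t : ℝ)) * v i))) :
    l2Norm (y' - y) ≤ 4 / √(t : ℝ) := by
  have hη : 0 ≤ 2 / (G * √(t : ℝ)) := by positivity
  have hmove := norm_sub_le_two_mul_of_isMinOn (isMinOn_toLp_of_l2Norm_le h)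
    (w := WithLp.toLp 2 y) hy
  have hstep : WithLp.toLp 2 y - WithLp.toLp 2 (fun i => y i - 2 / (G * √(t : ℝ)) * v i)
      = (2 / (G * √(t : ℝ))) • WithLp.toLp 2 v := by
    ext i; simp
  rw [hstep, norm_smul, Real.norm_of_nonneg hη] at hmove
  rw [l2Norm_eq_norm] at hv
  have hcancel : 2 / (G * √(t : ℝ)) * G = 2 / √(t : ℝ) := by
    rw [div_mul_eq_mul_div, mul_comm 2 G, mul_div_mul_left _ _ hG.ne']
  calc l2Norm (y' - y) = ‖WithLp.toLp 2 y' - WithLp.toLp 2 y‖ := l2Norm_eq_norm _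
    _ ≤ 2 * (2 / (G * √(t : ℝ)) * G) := hmove.trans (by gcongr)
    _ = 4 / √(t : ℝ) := by rw [hcancel]; ring

theorem sum_sub_le_of_simplex_projected_subgradient {f : ℕ → (Fin n → ℝ) → ℝ}
    {S g : ℕ → Fin n → ℝ} {s : Fin n → ℝ} {T : ℕ} {G : ℝ} (hG : 0 < G)
    (hs : s ∈ stdSimplex ℝ (Fin n))
    (hS : ∀ t, 1 ≤ t → t ≤ T + 1 → S t ∈ stdSimplex ℝ (Fin n))
    (hg : ∀ t, 1 ≤ t → t ≤ T → l2Norm (g t) ≤ G)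
    (hsub : ∀ t, 1 ≤ t → t ≤ T → ∀ y ∈ stdSimplex ℝ (Fin n),
      f t y ≥ f t (S t) + ∑ i, g t i * (y i - S t i))
    (hproj : ∀ t, 1 ≤ t → t ≤ T → ∀ z ∈ stdSimplex ℝ (Fin n),
      l2Norm (fun i => S (t + 1) i - (S t i - 2 / (G * √(t : ℝ)) * g t i))
        ≤ l2Norm (fun i => z i - (S t i - 2 / (G * √(t : ℝ)) * g t i))) :
    ∑ t ∈ Icc 1 T, (f t (S t) - f t s) ≤ 5 / 2 * G * √(T : ℝ) := by
  have hregret := sum_sub_le_of_projected_subgradient convex_ofLp_preimage_stdSimplex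
    (f := fun t y => f t y.ofLp) (x := fun t => WithLp.toLp 2 (S t))
    (g := fun t => WithLp.toLp 2 (g t)) (s := WithLp.toLp 2 s) (T := T) (A := 2)
    (div_pos two_pos hG) hs
    (fun y hy => by
      simpa [EuclideanSpace.norm_sq_eq] using sum_sq_sub_le_two_of_mem_stdSimplex hy hs)
    (fun t ht => hS t (mem_Icc.1 ht).1 (mem_Icc.1 ht).2)
    (fun t ht y hy => by
      simpa [PiLp.inner_apply, mul_comm] using hsub t (mem_Icc.1 ht).1 (mem_Icc.1 ht).2 _ hy)
    (fun t ht => by simpa [l2Norm_eq_norm] using hg t (mem_Icc.1 ht).1 (mem_Icc.1 ht).2)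
    (fun t ht => by
      rw [div_div]
      exact isMinOn_toLp_of_l2Norm_le (hproj t (mem_Icc.1 ht).1 (mem_Icc.1 ht).2))
  calc ∑ t ∈ Icc 1 T, (f t (S t) - f t s) ≤ _ := hregret
    _ = 5 / 2 * G * √(T : ℝ) := by field_simp; ring

end SimplexDescent

theorem regret_constants_le {n T : ℕ} (hn : 1 ≤ n) (hT : 1 ≤ T) {cmax lmax : ℝ}
    (hc : 0 ≤ cmax) (hl : 0 ≤ lmax) :
    5 / 2 * ((n : ℝ) ^ 2 * (cmax + lmax)) * √(T : ℝ)
        + (2 * cmax + 2 * 4 * cmax * √(n : ℝ) * √(T : ℝ)) + 2 * cmax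
      ≤ 20 * (n : ℝ) ^ ((5 : ℝ) / 2) * (1 + cmax + lmax) ^ 2 * √(T : ℝ) := by
  set N := (n : ℝ) ^ ((5 : ℝ) / 2)
  set M := (1 + cmax + lmax) ^ 2
  have hn1 : (1 : ℝ) ≤ n := by exact_mod_cast hn
  have hN1 : 1 ≤ N := Real.one_le_rpow hn1 (by norm_num)
  have hN2 : (n : ℝ) ^ 2 ≤ N := by
    rw [← Real.rpow_natCast]; exact Real.rpow_le_rpow_of_exponent_le hn1 (by norm_num)
  have hNs : √(n : ℝ) ≤ N := by
    rw [Real.sqrt_eq_rpow]; exact Real.rpow_le_rpow_of_exponent_le hn1 (by norm_num)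
  have hM : cmax + lmax ≤ M := by nlinarith
  have hT1 : 1 ≤ √(T : ℝ) := Real.one_le_sqrt.2 (by exact_mod_cast hT)
  have hNM : 1 ≤ N * M := by nlinarith
  have h1 : (n : ℝ) ^ 2 * (cmax + lmax) ≤ N * M := mul_le_mul hN2 hM (by positivity) (by positivity)
  have h2 : cmax * √(n : ℝ) ≤ N * M := by
    rw [mul_comm N]; exact mul_le_mul (by linarith) hNs (by positivity) (by positivity)
  have h3 : cmax ≤ N * M * √(T : ℝ) := by nlinarith
  nlinarith [mul_le_mul_of_nonneg_right h1 (Real.sqrt_nonneg (T : ℝ)),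
    mul_le_mul_of_nonneg_right h2 (Real.sqrt_nonneg (T : ℝ))]

theorem stmt6_general (n T : ℕ) (hn : 1 ≤ n) (hT : 1 ≤ T)
    (c l : Fin n → Fin n → ℝ)
    (hc : ∀ i j, 0 ≤ c i j) (hl : ∀ i j, 0 ≤ l i j)
    (cmax lmax : ℝ)
    (hcmax : IsGreatest {x : ℝ | ∃ i j, x = c i j} cmax)
    (hlmax : IsGreatest {x : ℝ | ∃ i j, x = l i j} lmax)
    (hpos : 0 < cmax + lmax)
    (d : ℕ → Fin n → ℝ) (P : ℕ → Fin n → Fin n → ℝ)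
    (hd : ∀ t, 1 ≤ t → t ≤ T → ∀ i, d t i ∈ Set.Icc (0 : ℝ) 1)
    (hP : ∀ t, 1 ≤ t → t ≤ T → RowStochastic (P t))
    (x1 : Fin n → ℝ) (hx1 : x1 ∈ stdSimplex ℝ (Fin n))
    (S g : ℕ → Fin n → ℝ)
    (hS1 : S 1 ∈ stdSimplex ℝ (Fin n))
    (hgbound : ∀ t, 1 ≤ t → t ≤ T → l2Norm (g t) ≤ (n : ℝ) ^ 2 * (cmax + lmax))
    (hsubgrad : ∀ t, 1 ≤ t → t ≤ T → ∀ y ∈ stdSimplex ℝ (Fin n),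
      surr c l (d t) (P t) y
        ≥ surr c l (d t) (P t) (S t) + ∑ i, g t i * (y i - S t i))
    (hproj : ∀ t, 1 ≤ t → t ≤ T →
      S (t + 1) ∈ stdSimplex ℝ (Fin n) ∧
      ∀ z ∈ stdSimplex ℝ (Fin n),
        l2Norm (fun i => S (t + 1) i
            - (S t i - (2 / ((n : ℝ) ^ 2 * (cmax + lmax) * Real.sqrt t)) * g t i))
          ≤ l2Norm (fun i => z i
            - (S t i - (2 / ((n : ℝ) ^ 2 * (cmax + lmax) * Real.sqrt t)) * g t i)))
    (xalg : ℕ → Fin n → ℝ) (hxalg1 : xalg 1 = x1)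
    (hxalg : ∀ t, 1 ≤ t → t ≤ T → ∀ i,
      xalg (t + 1) i = max (S t i - d t i) 0 + ∑ j, P t j i * min (S t j) (d t j))
    (Sstar : Fin n → ℝ) (hSstar : Sstar ∈ stdSimplex ℝ (Fin n))
    (xs : ℕ → Fin n → ℝ)
    (hxs : ∀ t, 1 ≤ t → t ≤ T → ∀ i,
      xs (t + 1) i = max (Sstar i - d t i) 0 + ∑ j, P t j i * min (Sstar j) (d t j)) :
    (∑ t ∈ Finset.Icc 1 T, Ctilde c l (xalg t) (S t) (d t) (P t))
      - ∑ t ∈ Finset.Icc 1 T, Ctilde c l (xs t) Sstar (d t) (P t)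
      ≤ 20 * (n : ℝ) ^ ((5 : ℝ) / 2) * (1 + cmax + lmax) ^ 2 * Real.sqrt T := by
  have : NeZero n := ⟨by omega⟩
  have hcb : ∀ i j, c i j ≤ cmax := fun i j => hcmax.2 ⟨i, j, rfl⟩
  have hc0 : 0 ≤ cmax := (hc 0 0).trans (hcb 0 0)
  have hl0 : 0 ≤ lmax := (hl 0 0).trans (hlmax.2 ⟨0, 0, rfl⟩)
  have hG : 0 < (n : ℝ) ^ 2 * (cmax + lmax) := by positivity
  have hS : ∀ t, 1 ≤ t → t ≤ T + 1 → S t ∈ stdSimplex ℝ (Fin n) := by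
    intro t ht
    induction t, ht using Nat.le_induction with
    | base => exact fun _ => hS1
    | succ t ht _ => exact fun _ => (hproj t ht (by omega)).1
  have hsurr := sum_sub_le_of_simplex_projected_subgradient hG hSstar hS hgbound hsubgrad
    fun t h1 h2 => (hproj t h1 h2).2
  have halg := sum_repoCost_sub_le_of_steps hc hcb hT (fun t h1 h2 => (hP t h1 h2).2) hS
    (hxalg1 ▸ hx1) hxalg fun t h1 h2 =>
      l2Norm_sub_le_of_simplex_step hG (hS t h1 (by omega)) (hgbound t h1 h2) (hproj t h1 h2).2
  have hbase := neg_two_mul_le_sum_repoCost_sub_baseStock hc hcb hT hSstar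
    (fun i => (hd T hT le_rfl i).1) (hP T hT le_rfl) hxs
  simp only [Ctilde_eq_surr_add, sum_add_distrib]
  rw [sum_sub_distrib] at hsurr
  linarith [regret_constants_le hn hT hc0 hl0]

theorem stmt6 (n T : ℕ) (hn : 1 ≤ n) (hT : 1 ≤ T)
    (c l : Fin n → Fin n → ℝ)
    (hc : ∀ i j, 0 ≤ c i j) (hl : ∀ i j, 0 ≤ l i j)
    (cmax lmax : ℝ)
    (hcmax : IsGreatest {x : ℝ | ∃ i j, x = c i j} cmax)
    (hlmax : IsGreatest {x : ℝ | ∃ i j, x = l i j} lmax)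
    (hpos : 0 < cmax + lmax)
    (d : ℕ → Fin n → ℝ) (P : ℕ → Fin n → Fin n → ℝ)
    (hd : ∀ t, 1 ≤ t → t ≤ T → ∀ i, d t i ∈ Set.Icc (0 : ℝ) 1)
    (hP : ∀ t, 1 ≤ t → t ≤ T → RowStochastic (P t))
    (x1 : Fin n → ℝ) (hx1 : x1 ∈ stdSimplex ℝ (Fin n))
    (S g : ℕ → Fin n → ℝ)
    (hS1 : S 1 ∈ stdSimplex ℝ (Fin n))
    (hgbound : ∀ t, 1 ≤ t → t ≤ T → l2Norm (g t) ≤ (n : ℝ) ^ 2 * (cmax + lmax))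
    (hsubgrad : ∀ t, 1 ≤ t → t ≤ T → ∀ y ∈ stdSimplex ℝ (Fin n),
      surr c l (d t) (P t) y
        ≥ surr c l (d t) (P t) (S t) + ∑ i, g t i * (y i - S t i))
    (hproj : ∀ t, 1 ≤ t → t ≤ T →
      S (t + 1) ∈ stdSimplex ℝ (Fin n) ∧
      ∀ z ∈ stdSimplex ℝ (Fin n),
        l2Norm (fun i => S (t + 1) i
            - (S t i - (2 / ((n : ℝ) ^ 2 * (cmax + lmax) * Real.sqrt t)) * g t i))
          ≤ l2Norm (fun i => z i
            - (S t i - (2 / ((n : ℝ) ^ 2 * (cmax + lmax) * Real.sqrt t)) * g t i)))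
    (xalg : ℕ → Fin n → ℝ) (hxalg1 : xalg 1 = x1)
    (hxalg : ∀ t, 1 ≤ t → t ≤ T → ∀ i,
      xalg (t + 1) i = max (S t i - d t i) 0 + ∑ j, P t j i * min (S t j) (d t j))
    (Sstar : Fin n → ℝ) (hSstar : Sstar ∈ stdSimplex ℝ (Fin n))
    (xs : ℕ → Fin n → ℝ) (hxs1 : xs 1 = x1)
    (hxs : ∀ t, 1 ≤ t → t ≤ T → ∀ i,
      xs (t + 1) i = max (Sstar i - d t i) 0 + ∑ j, P t j i * min (Sstar j) (d t j)) :
    (∑ t ∈ Finset.Icc 1 T, Ctilde c l (xalg t) (S t) (d t) (P t))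
      - ∑ t ∈ Finset.Icc 1 T, Ctilde c l (xs t) Sstar (d t) (P t)
      ≤ 20 * (n : ℝ) ^ ((5 : ℝ) / 2) * (1 + cmax + lmax) ^ 2 * Real.sqrt T :=
  stmt6_general n T hn hT c l hc hl cmax lmax hcmax hlmax hpos d P hd hP x1 hx1 S g hS1 hgbound
    hsubgrad hproj xalg hxalg1 hxalg Sstar hSstar xs hxs
end

section
/- Let m ≥ 1 and let V be a nonempty finite subset of [0,1]^m. Let σ = (σ₁,…,σ_m) be uniformly distributed on {−1,1}^m. Then E[ max_{v∈V} (1/m) ∑_{i=1}^m σ_i v_i ] ≤ √( 2 · log|V| / m ). -/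
/-!
For a single vector `v` with entries in `[-1, 1]`, independence of the signs and
`cosh x ≤ exp (x ^ 2 / 2)` bound the moment generating function of the normalised Rademacher
sum `(1/m) ∑ σᵢ vᵢ` by `exp (t ^ 2 / (2 m))`. For the maximum over `V`, Jensen's inequality
and `exp (t max) ≤ ∑ exp (t ·)` give `t · 𝔼 max ≤ log |V| + t ^ 2 / (2 m)` for every `t > 0`,
and optimising over `t` yields `√(2 log |V| / m)`.
-/

/-- A Boolean sign, as a real number in `{−1, 1}`. -/
def signv (b : Bool) : ℝ := if b then 1 else -1

open Real Finset
open scoped BigOperators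

lemma sum_bool_exp_signv_mul (x : ℝ) : ∑ b : Bool, exp (signv b * x) = 2 * cosh x := by
  simp only [Fintype.sum_bool, signv, if_true, Bool.false_eq_true, if_false, one_mul, neg_one_mul,
    cosh_eq]
  ring

lemma sum_exp_sum_signv_mul {ι : Type*} [Fintype ι] [DecidableEq ι] (a : ι → ℝ) :
    ∑ σ : ι → Bool, exp (∑ i, signv (σ i) * a i) = ∏ i, 2 * cosh (a i) := by
  simp_rw [exp_sum, ← sum_bool_exp_signv_mul, Fintype.prod_sum]

lemma expect_exp_sum_signv_mul_le {ι : Type*} [Fintype ι] [DecidableEq ι] (a : ι → ℝ) :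
    𝔼 σ : ι → Bool, exp (∑ i, signv (σ i) * a i) ≤ exp (∑ i, a i ^ 2 / 2) := by
  rw [Fintype.expect_eq_sum_div_card, sum_exp_sum_signv_mul, div_le_iff₀ (by positivity)]
  calc ∏ i, 2 * cosh (a i) ≤ ∏ i, 2 * exp (a i ^ 2 / 2) :=
        prod_le_prod (fun i _ => by positivity) fun i _ => by gcongr; exact cosh_le_exp_half_sq _
    _ = exp (∑ i, a i ^ 2 / 2) * Fintype.card (ι → Bool) := by
        simp [prod_mul_distrib, exp_sum, mul_comm]

lemma expect_exp_mul_sum_signv_mul_le {ι : Type*} [Fintype ι] [DecidableEq ι] (v : ι → ℝ)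
    (hv : ∀ i, |v i| ≤ 1) (s : ℝ) :
    𝔼 σ : ι → Bool, exp (s * ∑ i, signv (σ i) * v i) ≤ exp (Fintype.card ι * s ^ 2 / 2) :=
  calc 𝔼 σ : ι → Bool, exp (s * ∑ i, signv (σ i) * v i)
      = 𝔼 σ : ι → Bool, exp (∑ i, signv (σ i) * (s * v i)) := by simp_rw [mul_sum, mul_left_comm]
    _ ≤ exp (∑ i, (s * v i) ^ 2 / 2) := expect_exp_sum_signv_mul_le _
    _ ≤ exp (∑ _i : ι, s ^ 2 / 2) := by
        refine exp_le_exp.2 (sum_le_sum fun i _ => ?_)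
        rw [mul_pow]
        gcongr ?_ / 2
        exact mul_le_of_le_one_right (sq_nonneg s) ((sq_le_one_iff_abs_le_one _).2 (hv i))
    _ = exp (Fintype.card ι * s ^ 2 / 2) := by simp [mul_div_assoc]

lemma exp_expect_le_expect_exp {Ω : Type*} [Fintype Ω] [Nonempty Ω] (f : Ω → ℝ) :
    exp (𝔼 ω, f ω) ≤ 𝔼 ω, exp (f ω) := by
  have hcard : (0 : ℝ) < Fintype.card Ω := by positivity
  have hw : ∑ _ω : Ω, (Fintype.card Ω : ℝ)⁻¹ = 1 := by simp [hcard.ne']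
  simpa [Fintype.expect_eq_sum_div_card, div_eq_inv_mul, mul_sum] using
    convexOn_exp.map_sum_le (t := univ) (fun _ _ => by positivity) hw
      (fun ω _ => Set.mem_univ (f ω))

lemma exp_mul_sup'_le_sum_exp {α : Type*} (V : Finset α) (hV : V.Nonempty) (f : α → ℝ) (t : ℝ) :
    exp (t * V.sup' hV f) ≤ ∑ v ∈ V, exp (t * f v) := by
  obtain ⟨v, hv, hsup⟩ := exists_mem_eq_sup' hV f
  rw [hsup]
  exact single_le_sum (f := fun v => exp (t * f v)) (fun _ _ => (exp_pos _).le) hv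

lemma le_sqrt_of_forall_pos_mul_le {x a b : ℝ} (hb : 0 ≤ b)
    (h : ∀ t > 0, t * x ≤ a + b * t ^ 2 / 2) : x ≤ √(2 * a * b) := by
  by_contra! hx
  have hx0 : 0 < x := (sqrt_nonneg _).trans_lt hx
  have hsq : 2 * a * b < x ^ 2 := (sqrt_lt' hx0).1 hx
  rcases hb.eq_or_lt with rfl | hb
  · have := h ((|a| + 1) / x) (by positivity)
    rw [div_mul_cancel₀ _ hx0.ne'] at this
    linarith [le_abs_self a]
  · -- `t = x / b` minimises `a + b * t ^ 2 / 2 - t * x`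
    have := h (x / b) (by positivity)
    rw [div_pow] at this
    field_simp at this
    nlinarith

theorem expect_sup'_le_sqrt_of_expect_exp_le {Ω α : Type*} [Fintype Ω] [Nonempty Ω]
    (X : α → Ω → ℝ) (V : Finset α) (hV : V.Nonempty) {c : ℝ} (hc : 0 ≤ c)
    (hmgf : ∀ v ∈ V, ∀ t > 0, 𝔼 ω, exp (t * X v ω) ≤ exp (c * t ^ 2 / 2)) :
    𝔼 ω, V.sup' hV (X · ω) ≤ √(2 * log #V * c) := by
  refine le_sqrt_of_forall_pos_mul_le hc fun t ht => ?_
  have hexp : exp (t * 𝔼 ω, V.sup' hV (X · ω)) ≤ #V * exp (c * t ^ 2 / 2) :=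
    calc exp (t * 𝔼 ω, V.sup' hV (X · ω))
        = exp (𝔼 ω, t * V.sup' hV (X · ω)) := by rw [mul_expect]
      _ ≤ 𝔼 ω, exp (t * V.sup' hV (X · ω)) := exp_expect_le_expect_exp _
      _ ≤ 𝔼 ω, ∑ v ∈ V, exp (t * X v ω) :=
          expect_le_expect fun ω _ => exp_mul_sup'_le_sum_exp V hV _ t
      _ = ∑ v ∈ V, 𝔼 ω, exp (t * X v ω) := expect_sum_comm _ _ _
      _ ≤ ∑ _v ∈ V, exp (c * t ^ 2 / 2) := sum_le_sum fun v hv => hmgf v hv t ht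
      _ = #V * exp (c * t ^ 2 / 2) := by rw [sum_const, nsmul_eq_mul]
  have hV0 : (#V : ℝ) ≠ 0 := by exact_mod_cast hV.card_pos.ne'
  have hlog := log_le_log (exp_pos _) hexp
  rwa [log_exp, log_mul hV0 (exp_pos _).ne', log_exp] at hlog

theorem stmt9_general (m : ℕ)
    (V : Finset (Fin m → ℝ)) (hV : V.Nonempty)
    (hV01 : ∀ v ∈ V, ∀ i, v i ∈ Set.Icc (0 : ℝ) 1) :
    (1 / 2 ^ m : ℝ) * ∑ σ : Fin m → Bool,
        V.sup' hV (fun v => (1 / m : ℝ) * ∑ i, signv (σ i) * v i)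
      ≤ Real.sqrt (2 * Real.log V.card / m) := by
  have hmgf : ∀ v ∈ V, ∀ t > 0, 𝔼 σ : Fin m → Bool,
      exp (t * ((1 / m : ℝ) * ∑ i, signv (σ i) * v i)) ≤ exp (1 / m * t ^ 2 / 2) := by
    intro v hv t _
    have hv1 (i : Fin m) : |v i| ≤ 1 := by
      obtain ⟨h0, h1⟩ := hV01 v hv i
      exact abs_le.2 ⟨by linarith, h1⟩
    have hvar : (m : ℝ) * (t / m) ^ 2 = 1 / m * t ^ 2 := by
      rcases eq_or_ne m 0 with rfl | hm
      · simp
      · field_simp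
    simpa only [← mul_assoc, mul_one_div, Fintype.card_fin, hvar] using
      expect_exp_mul_sum_signv_mul_le v hv1 (t / m)
  have := expect_sup'_le_sqrt_of_expect_exp_le _ V hV (by positivity) hmgf
  convert this using 1
  · simp [Fintype.expect_eq_sum_div_card, div_eq_inv_mul]
  · rw [mul_one_div]

theorem stmt9 (m : ℕ) (hm : 1 ≤ m)
    (V : Finset (Fin m → ℝ)) (hV : V.Nonempty)
    (hV01 : ∀ v ∈ V, ∀ i, v i ∈ Set.Icc (0 : ℝ) 1) :
    (1 / 2 ^ m : ℝ) * ∑ σ : Fin m → Bool,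
        V.sup' hV (fun v => (1 / m : ℝ) * ∑ i, signv (σ i) * v i)
      ≤ Real.sqrt (2 * Real.log V.card / m) :=
  stmt9_general m V hV hV01
end

section
/- Fix c ∈ (1/2, 1). For p ∈ (0, 1/2) let ν_p be the probability measure on ℝ × ℝ given by ν_p = p·δ_{(1,1)} + p·δ_{(c,c)} + (1/2 − p)·δ_{(1,c)} + (1/2 − p)·δ_{(c,1)}, where δ_z denotes the Dirac measure at z. Then: (i) for all p, q ∈ (0, 1/2) with p ≠ q, ν_p ≠ ν_q; and yet (ii) for every pair (x₀, y₀) with x₀ ≥ 0, y₀ ≥ 0 and x₀ + y₀ = 1, and for all p, q ∈ (0, 1/2), the pushforward of ν_p under the censoring map (x, y) ↦ (min(x, x₀), min(y, y₀)) is equal to the pushforward of ν_q under the same map. -/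
open MeasureTheory

/-- The two-location joint demand distribution `ν_p` supported on
`{(1,1), (c,c), (1,c), (c,1)}` with weights `p, p, 1/2 − p, 1/2 − p`. -/
noncomputable def nuMeas (c p : ℝ) : Measure (ℝ × ℝ) :=
  ENNReal.ofReal p • Measure.dirac (1, 1)
    + ENNReal.ofReal p • Measure.dirac (c, c)
    + ENNReal.ofReal (1 / 2 - p) • Measure.dirac (1, c)
    + ENNReal.ofReal (1 / 2 - p) • Measure.dirac (c, 1)

lemma nuMeas_singleton (c p : ℝ) (hc : c ≠ 1) (hp : 0 ≤ p) :
    nuMeas c p {((1 : ℝ), (1 : ℝ))} = ENNReal.ofReal p := by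
  have hms : MeasurableSet ({((1 : ℝ), (1 : ℝ))} : Set (ℝ × ℝ)) :=
    measurableSet_singleton _
  have h1 : ((c, c) : ℝ × ℝ) ∉ ({((1 : ℝ), (1 : ℝ))} : Set (ℝ × ℝ)) := by
    simp [Prod.ext_iff, hc]
  have h2 : ((1, c) : ℝ × ℝ) ∉ ({((1 : ℝ), (1 : ℝ))} : Set (ℝ × ℝ)) := by
    simp [Prod.ext_iff, hc]
  have h3 : ((c, 1) : ℝ × ℝ) ∉ ({((1 : ℝ), (1 : ℝ))} : Set (ℝ × ℝ)) := by
    simp [Prod.ext_iff, hc]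
  simp [nuMeas, Measure.add_apply, Measure.smul_apply, Measure.dirac_apply' _ hms,
    Set.indicator_apply, hc]

theorem stmt10 (c : ℝ) (hc : c ∈ Set.Ioo (1 / 2 : ℝ) 1) :
    (∀ p ∈ Set.Ioo (0 : ℝ) (1 / 2), ∀ q ∈ Set.Ioo (0 : ℝ) (1 / 2),
      p ≠ q → nuMeas c p ≠ nuMeas c q) ∧
    (∀ x₀ y₀ : ℝ, 0 ≤ x₀ → 0 ≤ y₀ → x₀ + y₀ = 1 →
      ∀ p ∈ Set.Ioo (0 : ℝ) (1 / 2), ∀ q ∈ Set.Ioo (0 : ℝ) (1 / 2),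
        (nuMeas c p).map (fun z : ℝ × ℝ => (min z.1 x₀, min z.2 y₀))
          = (nuMeas c q).map (fun z : ℝ × ℝ => (min z.1 x₀, min z.2 y₀))) := by
  obtain ⟨hc1, hc2⟩ := hc
  constructor
  · intro p hp q hq hpq h
    have := congrArg (fun μ : Measure (ℝ × ℝ) => μ {((1 : ℝ), (1 : ℝ))}) h
    simp only [nuMeas_singleton c _ (ne_of_lt hc2) hp.1.le,
      nuMeas_singleton c _ (ne_of_lt hc2) hq.1.le] at this
    exact hpq ((ENNReal.ofReal_eq_ofReal_iff hp.1.le hq.1.le).mp this)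
  · intro x₀ y₀ hx hy hxy p hp q hq
    set f : ℝ × ℝ → ℝ × ℝ := fun z => (min z.1 x₀, min z.2 y₀) with hf_def
    have hf : Measurable f :=
      ((measurable_fst.min measurable_const).prod (measurable_snd.min measurable_const))
    have hmap : ∀ r : ℝ, (nuMeas c r).map f =
        ENNReal.ofReal r • Measure.dirac (f (1, 1))
          + ENNReal.ofReal r • Measure.dirac (f (c, c))
          + ENNReal.ofReal (1 / 2 - r) • Measure.dirac (f (1, c))
          + ENNReal.ofReal (1 / 2 - r) • Measure.dirac (f (c, 1)) := by
      intro r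
      simp [nuMeas, Measure.map_add _ _ hf, Measure.map_smul, Measure.map_dirac' hf]
    have key : ∀ r ∈ Set.Ioo (0 : ℝ) (1 / 2), ∀ A B : ℝ × ℝ,
        ENNReal.ofReal r • Measure.dirac A + ENNReal.ofReal r • Measure.dirac B
          + ENNReal.ofReal (1 / 2 - r) • Measure.dirac B
          + ENNReal.ofReal (1 / 2 - r) • Measure.dirac A
        = ENNReal.ofReal (1 / 2) • Measure.dirac A
          + ENNReal.ofReal (1 / 2) • Measure.dirac B := by
      intro r hr A B
      have hsum : ENNReal.ofReal r + ENNReal.ofReal (1 / 2 - r) = ENNReal.ofReal (1 / 2) := by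
        rw [← ENNReal.ofReal_add hr.1.le (by linarith [hr.2])]
        ring_nf
      rw [← hsum, add_smul, add_smul]
      abel
    rcases le_total x₀ (1 / 2) with hx2 | hx2
    · have h1 : min (1 : ℝ) x₀ = x₀ := min_eq_right (by linarith)
      have h2 : min c x₀ = x₀ := min_eq_right (by linarith)
      have hA : f (1, 1) = (x₀, min 1 y₀) := by simp [hf_def, h1]
      have hB : f (c, c) = (x₀, min c y₀) := by simp [hf_def, h2]
      have hC : f (1, c) = (x₀, min c y₀) := by simp [hf_def, h1]
      have hD : f (c, 1) = (x₀, min 1 y₀) := by simp [hf_def, h2]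
      rw [hmap p, hmap q, hA, hB, hC, hD, key p hp _ _, key q hq _ _]
    · have hy2 : y₀ ≤ 1 / 2 := by linarith
      have h1 : min (1 : ℝ) y₀ = y₀ := min_eq_right (by linarith)
      have h2 : min c y₀ = y₀ := min_eq_right (by linarith)
      have hA : f (1, 1) = (min 1 x₀, y₀) := by simp [hf_def, h1]
      have hB : f (c, c) = (min c x₀, y₀) := by simp [hf_def, h2]
      have hC : f (1, c) = (min 1 x₀, y₀) := by simp [hf_def, h2]
      have hD : f (c, 1) = (min c x₀, y₀) := by simp [hf_def, h1]
      rw [hmap p, hmap q, hA, hB, hC, hD]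
      have key2 : ∀ r ∈ Set.Ioo (0 : ℝ) (1 / 2), ∀ A B : ℝ × ℝ,
          ENNReal.ofReal r • Measure.dirac A + ENNReal.ofReal r • Measure.dirac B
            + ENNReal.ofReal (1 / 2 - r) • Measure.dirac A
            + ENNReal.ofReal (1 / 2 - r) • Measure.dirac B
          = ENNReal.ofReal (1 / 2) • Measure.dirac A
            + ENNReal.ofReal (1 / 2) • Measure.dirac B := by
        intro r hr A B
        have hsum : ENNReal.ofReal r + ENNReal.ofReal (1 / 2 - r) = ENNReal.ofReal (1 / 2) := by
          rw [← ENNReal.ofReal_add hr.1.le (by linarith [hr.2])]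
          ring_nf
        rw [← hsum, add_smul, add_smul]
        abel
      rw [key2 p hp _ _, key2 q hq _ _]
end
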